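/- arXiv:2403.20224 — 6 statements merged into one kernel-verified Lean document; each statement's English description precedes it below -/
import Mathlib

section
/- Assume that f : A → B and g : A → C are finite ring homomorphisms (i.e., B and C are finitely generated A-modules via f and g respectively). Then the following are equivalent: (1) A⋈^{f,g}(𝔟,𝔠) is a Noetherian ring; (2) B and C are Noetherian rings; (3) A/𝔨 is a Noetherian ring, where 𝔨 := ker(f) ∩ ker(g). -/
/-- The bi-amalgamation of `A` with `(B, C)` along `(𝔟, 𝔠)` with respect to `(f, g)`:
the subring `{(f a + β, g a + γ) | a ∈ A, β ∈ 𝔟, γ ∈ 𝔠}` of `B × C`. -/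
def biAmalgamation {A B C : Type*} [CommRing A] [CommRing B] [CommRing C]
    (f : A →+* B) (g : A →+* C) (𝔟 : Ideal B) (𝔠 : Ideal C) : Subring (B × C) where
  carrier := {x | ∃ a β γ, β ∈ 𝔟 ∧ γ ∈ 𝔠 ∧ x = (f a + β, g a + γ)}
  one_mem' := ⟨1, 0, 0, 𝔟.zero_mem, 𝔠.zero_mem, by ext <;> simp⟩
  zero_mem' := ⟨0, 0, 0, 𝔟.zero_mem, 𝔠.zero_mem, by ext <;> simp⟩
  add_mem' := by
    rintro x y ⟨a₁, β₁, γ₁, hβ₁, hγ₁, rfl⟩ ⟨a₂, β₂, γ₂, hβ₂, hγ₂, rfl⟩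
    exact ⟨a₁ + a₂, β₁ + β₂, γ₁ + γ₂, 𝔟.add_mem hβ₁ hβ₂, 𝔠.add_mem hγ₁ hγ₂, by
      simp only [Prod.ext_iff, map_add, Prod.fst_add, Prod.snd_add]
      constructor <;> ring⟩
  neg_mem' := by
    rintro x ⟨a, β, γ, hβ, hγ, rfl⟩
    exact ⟨-a, -β, -γ, 𝔟.neg_mem hβ, 𝔠.neg_mem hγ, by
      simp only [Prod.ext_iff, map_neg, Prod.fst_neg, Prod.snd_neg]
      constructor <;> ring⟩
  mul_mem' := by
    rintro x y ⟨a₁, β₁, γ₁, hβ₁, hγ₁, rfl⟩ ⟨a₂, β₂, γ₂, hβ₂, hγ₂, rfl⟩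
    refine ⟨a₁ * a₂, f a₁ * β₂ + β₁ * f a₂ + β₁ * β₂,
      g a₁ * γ₂ + γ₁ * g a₂ + γ₁ * γ₂,
      𝔟.add_mem (𝔟.add_mem (Ideal.mul_mem_left _ _ hβ₂) (Ideal.mul_mem_right _ _ hβ₁))
        (Ideal.mul_mem_right _ _ hβ₁),
      𝔠.add_mem (𝔠.add_mem (Ideal.mul_mem_left _ _ hγ₂) (Ideal.mul_mem_right _ _ hγ₁))
        (Ideal.mul_mem_right _ _ hγ₁), by
      simp only [Prod.ext_iff, map_mul, Prod.fst_mul, Prod.snd_mul]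
      constructor <;> ring⟩


-- L1: transfer Noetherianity along a surjective scalar map
theorem isNoetherian_of_surjective_algebraMap {A A' M : Type*} [CommRing A] [CommRing A']
    [Algebra A A'] [AddCommGroup M] [Module A M] [Module A' M] [IsScalarTower A A' M]
    (hsurj : Function.Surjective (algebraMap A A')) (h : IsNoetherian A' M) :
    IsNoetherian A M := by
  rw [isNoetherian_def] at h ⊢
  intro N
  let N' : Submodule A' M :=
  { carrier := N
    add_mem' := fun ha hb => N.add_mem ha hb
    zero_mem' := N.zero_mem
    smul_mem' := by
      intro a' m hm
      obtain ⟨a, rfl⟩ := hsurj a'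
      rw [algebraMap_smul]
      exact N.smul_mem a hm }
  obtain ⟨T, hT⟩ := h N'
  refine ⟨T, le_antisymm (Submodule.span_le.mpr ?_) ?_⟩
  · intro x hx
    exact (show x ∈ N' from hT ▸ Submodule.subset_span hx)
  · intro x hx
    have hx' : x ∈ Submodule.span A' (T : Set M) := hT.symm ▸ (show x ∈ N' from hx)
    refine Submodule.span_induction (fun y hy => Submodule.subset_span hy)
      (Submodule.zero_mem _) (fun y z _ _ hy hz => Submodule.add_mem _ hy hz) ?_ hx'
    intro a' y _ hy
    obtain ⟨a, rfl⟩ := hsurj a'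
    rw [algebraMap_smul]
    exact Submodule.smul_mem _ a hy


-- L2: if the quotient by every nonzero submodule is Noetherian, so is the module
theorem isNoetherian_of_quotients {A M : Type*} [Ring A] [AddCommGroup M] [Module A M]
    (h : ∀ P : Submodule A M, P ≠ ⊥ → IsNoetherian A (M ⧸ P)) : IsNoetherian A M := by
  rw [← monotone_stabilizes_iff_noetherian]
  intro c
  by_cases hc : ∀ n, c n = ⊥
  · exact ⟨0, fun n _ => by rw [hc, hc]⟩
  push_neg at hc
  obtain ⟨k, hk⟩ := hc
  haveI := h (c k) hk
  obtain ⟨n, hn⟩ := monotone_stabilizes_iff_noetherian.mpr this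
    ⟨fun m => (c (k + m)).map (c k).mkQ, fun i j hij => Submodule.map_mono (c.mono (by omega))⟩
  refine ⟨k + n, fun m hm => ?_⟩
  have h1 : (c m).map (c k).mkQ = (c (k + n)).map (c k).mkQ := by
    have := hn (m - k) (by omega)
    change Submodule.map (c k).mkQ (c (k + n)) = Submodule.map (c k).mkQ (c (k + (m - k))) at this
    simpa [show k + (m - k) = m by omega] using this.symm
  have hker : ∀ {l}, k ≤ l → Submodule.comap (c k).mkQ ((c l).map (c k).mkQ) = c l := by
    intro l hl
    rw [Submodule.comap_map_eq, Submodule.ker_mkQ, sup_eq_left.mpr (c.mono hl)]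
  calc c (k + n) = Submodule.comap (c k).mkQ ((c (k+n)).map (c k).mkQ) := (hker (by omega)).symm
    _ = Submodule.comap (c k).mkQ ((c m).map (c k).mkQ) := by rw [h1]
    _ = c m := hker (by omega)

-- Formanek's key step
theorem eakinNagata_aux {A S : Type*} [CommRing A] [CommRing S] [Algebra A S]
    [Module.Finite A S]
    (Hmax : ∀ I : Ideal A, I.map (algebraMap A S) ≠ ⊥ →
      IsNoetherian A (S ⧸ I.map (algebraMap A S))) :
    IsNoetherian A S := by
  classical
  set Γ : Set (Submodule A S) :=
    {N | ∀ a : A, (∀ s : S, a • s ∈ N) → algebraMap A S a = 0} with hΓ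
  have hbot : (⊥ : Submodule A S) ∈ Γ := by
    intro a ha
    simpa [Algebra.smul_def] using ha 1
  have hzorn : ∀ c ⊆ Γ, IsChain (· ≤ ·) c → ∀ N₀ ∈ c, ∃ ub ∈ Γ, ∀ z ∈ c, z ≤ ub := by
    intro c hc hchain N₀ hN₀
    refine ⟨sSup c, ?_, fun z hz => le_sSup hz⟩
    intro a ha
    have hfg : (Submodule.map (a • (LinearMap.id : S →ₗ[A] S)) ⊤).FG :=
      Submodule.FG.map _ (Module.finite_def.mp inferInstance)
    have hle : Submodule.map (a • (LinearMap.id : S →ₗ[A] S)) ⊤ ≤ sSup c := by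
      rintro x ⟨s, -, rfl⟩
      exact (by simpa using ha s : a • s ∈ sSup c)
    have hcpt := (Submodule.fg_iff_compact _).mp hfg
    obtain ⟨x, hxc, hx⟩ := (CompleteLattice.isCompactElement_iff_le_of_directed_sSup_le _ _).mp
      hcpt c ⟨N₀, hN₀⟩ hchain.directedOn hle
    refine hc hxc a fun s => hx ?_
    exact ⟨s, trivial, rfl⟩
  obtain ⟨N, -, hNmem, hNmax⟩ := zorn_le_nonempty₀ Γ hzorn ⊥ hbot
  -- key: quotient by anything strictly above N is Noetherian
  have key : ∀ P : Submodule A S, N < P → IsNoetherian A (S ⧸ P) := by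
    intro P hP
    have hPΓ : P ∉ Γ := fun hmem => hP.not_ge (hNmax hmem hP.le)
    simp only [hΓ, Set.mem_setOf_eq] at hPΓ
    push_neg at hPΓ
    obtain ⟨a, haP, ha0⟩ := hPΓ
    set J : Ideal S := (Ideal.span {a}).map (algebraMap A S) with hJ
    have hJne : J ≠ ⊥ := by
      intro hbot'
      exact ha0 (by
        have : algebraMap A S a ∈ J :=
          Ideal.mem_map_of_mem _ (Ideal.mem_span_singleton_self a)
        simpa [hbot'] using this)
    haveI := Hmax _ hJne
    have hJP : (J : Submodule S S).restrictScalars A ≤ P := by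
      intro x hx
      rw [Submodule.restrictScalars_mem] at hx
      rw [hJ, Ideal.map_span, Set.image_singleton, Ideal.mem_span_singleton'] at hx
      obtain ⟨s, rfl⟩ := hx
      have : a • s ∈ P := haP s
      rwa [Algebra.smul_def, mul_comm] at this
    let e := (Submodule.Quotient.restrictScalarsEquiv A (J : Submodule S S)).symm
    let q : (S ⧸ (J : Submodule S S).restrictScalars A) →ₗ[A] S ⧸ P :=
      Submodule.mapQ _ P LinearMap.id hJP
    have hq : Function.Surjective (q ∘ₗ e.toLinearMap) := by
      intro x
      obtain ⟨s, rfl⟩ := Submodule.Quotient.mk_surjective P x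
      exact ⟨Submodule.Quotient.mk s, rfl⟩
    exact isNoetherian_of_surjective _ (LinearMap.range_eq_top.mpr hq)
  -- S ⧸ N is Noetherian
  haveI hSN : IsNoetherian A (S ⧸ N) := by
    refine isNoetherian_of_quotients fun Q hQ => ?_
    set P := Submodule.comap N.mkQ Q with hPdef
    have hmapP : Submodule.map N.mkQ P = Q := by
      rw [hPdef, Submodule.map_comap_eq, Submodule.range_mkQ, top_inf_eq]
    have hNP : N < P := by
      refine lt_of_le_of_ne (Submodule.le_comap_mkQ _ _) fun heq => hQ ?_
      rw [← hmapP, ← heq, Submodule.mkQ_map_self]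
    haveI := key P hNP
    exact isNoetherian_of_linearEquiv
      (hmapP ▸ (Submodule.quotientQuotientEquivQuotient N P hNP.le)).symm
  -- conclude : S is Noetherian over A
  obtain ⟨t, ht⟩ : (⊤ : Submodule A S).FG := Module.finite_def.mp inferInstance
  let θ : A →ₗ[A] (↥(t : Set S) → S ⧸ N) :=
    LinearMap.pi fun i => LinearMap.toSpanSingleton A _ (N.mkQ i)
  haveI : IsNoetherian A (↥(t : Set S) → S ⧸ N) := isNoetherian_pi
  have hAq : IsNoetherian A (A ⧸ LinearMap.ker θ) :=
    isNoetherian_of_linearEquiv (LinearMap.quotKerEquivRange θ).symm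
  -- ker θ is contained in the kernel of algebraMap
  have hker : LinearMap.ker θ ≤ LinearMap.ker (Algebra.linearMap A S) := by
    intro a ha
    have hcomp : ∀ i : ↥(t : Set S), a • (i : S) ∈ N := by
      intro i
      have := congrFun (LinearMap.mem_ker.mp ha) i
      simpa [θ, LinearMap.toSpanSingleton, Submodule.Quotient.mk_smul,
        ← Submodule.Quotient.mk_smul, Submodule.Quotient.mk_eq_zero] using this
    have hall : ∀ s : S, a • s ∈ N := by
      intro s
      have hs : s ∈ Submodule.comap (a • (LinearMap.id : S →ₗ[A] S)) N := by
        have : s ∈ (⊤ : Submodule A S) := trivial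
        rw [← ht] at this
        refine Submodule.span_le.mpr ?_ this
        intro x hx
        simpa using hcomp ⟨x, hx⟩
      simpa using hs
    simpa [Algebra.linearMap] using hNmem a hall
  have hAker : IsNoetherian A (A ⧸ LinearMap.ker (Algebra.linearMap A S)) := by
    refine isNoetherian_of_surjective (Submodule.mapQ _ _ LinearMap.id hker) ?_
    rw [LinearMap.range_eq_top]
    intro x
    obtain ⟨a, rfl⟩ := Submodule.Quotient.mk_surjective _ x
    exact ⟨Submodule.Quotient.mk a, rfl⟩
  -- identify with the ring kernel and use finiteness over the quotient ring
  have hkereq : LinearMap.ker (Algebra.linearMap A S) =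
      (RingHom.ker (algebraMap A S) : Submodule A A) := by
    ext a; simp [RingHom.mem_ker]
  set I : Ideal A := RingHom.ker (algebraMap A S) with hI
  haveI hAI : IsNoetherian A (A ⧸ I) := by rwa [hkereq] at hAker
  haveI : IsNoetherianRing (A ⧸ I) := isNoetherianRing_iff.mpr (isNoetherian_of_tower A hAI)
  letI : Algebra (A ⧸ I) S :=
    (Ideal.Quotient.lift I (algebraMap A S) fun a ha => RingHom.mem_ker.mp ha).toAlgebra
  haveI : IsScalarTower A (A ⧸ I) S := IsScalarTower.of_algebraMap_eq fun a => by
    rw [RingHom.algebraMap_toAlgebra, Ideal.Quotient.algebraMap_eq, Ideal.Quotient.lift_mk]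
  haveI : Module.Finite (A ⧸ I) S := Module.Finite.of_restrictScalars_finite A _ _
  haveI : IsNoetherian (A ⧸ I) S := isNoetherian_of_isNoetherianRing_of_finite _ _
  exact isNoetherian_of_surjective_algebraMap Ideal.Quotient.mk_surjective this


/-- Eakin–Nagata: if `S` is a Noetherian ring, finite as a module over `A`,
then `S` is Noetherian as an `A`-module. -/
theorem eakinNagata {A S : Type*} [CommRing A] [CommRing S] [Algebra A S]
    [Module.Finite A S] [IsNoetherianRing S] : IsNoetherian A S := by
  by_contra hS
  set 𝒮 : Set (Ideal S) :=
    {J | (∃ I : Ideal A, I.map (algebraMap A S) = J) ∧ ¬ IsNoetherian A (S ⧸ J)} with h𝒮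
  have hbot : (⊥ : Ideal S) ∈ 𝒮 := by
    refine ⟨⟨⊥, Ideal.map_bot⟩, fun h => hS ?_⟩
    refine isNoetherian_of_injective (Ideal.Quotient.mkₐ A (⊥ : Ideal S)).toLinearMap ?_
    have h1 : Function.Injective (Ideal.Quotient.mk (⊥ : Ideal S)) :=
      (RingHom.injective_iff_ker_eq_bot _).mpr Ideal.mk_ker
    exact h1
  have hwf : WellFounded ((· > ·) : Ideal S → Ideal S → Prop) :=
    (isNoetherianRing_iff.mp ‹IsNoetherianRing S›).wf
  obtain ⟨J₀, hJ₀mem, hJ₀max⟩ := hwf.has_min 𝒮 ⟨⊥, hbot⟩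
  obtain ⟨⟨I₀, hI₀⟩, hnot⟩ := hJ₀mem
  apply hnot
  haveI : Module.Finite A (S ⧸ J₀) :=
    Module.Finite.of_surjective (Ideal.Quotient.mkₐ A J₀).toLinearMap
      Ideal.Quotient.mk_surjective
  apply eakinNagata_aux
  intro I hI
  have halg : algebraMap A (S ⧸ J₀) = (Ideal.Quotient.mk J₀).comp (algebraMap A S) := rfl
  have hmapmap : I.map (algebraMap A (S ⧸ J₀)) =
      (I.map (algebraMap A S)).map (Ideal.Quotient.mk J₀) := by
    rw [halg, ← Ideal.map_map]
  have hle : J₀ ≤ J₀ ⊔ I.map (algebraMap A S) := le_sup_left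
  have hlt : J₀ < J₀ ⊔ I.map (algebraMap A S) := by
    refine lt_of_le_of_ne hle fun heq => hI ?_
    have h2 : I.map (algebraMap A S) ≤ J₀ := by
      rw [heq]; exact le_sup_right
    rw [hmapmap]
    rw [← le_bot_iff]
    calc (I.map (algebraMap A S)).map (Ideal.Quotient.mk J₀)
        ≤ J₀.map (Ideal.Quotient.mk J₀) := Ideal.map_mono h2
      _ = ⊥ := by rw [Ideal.map_quotient_self]
  have hnoeth : IsNoetherian A (S ⧸ (J₀ ⊔ I.map (algebraMap A S))) := by
    by_contra hcon
    exact hJ₀max _ ⟨⟨I₀ ⊔ I, by rw [Ideal.map_sup, hI₀]⟩, hcon⟩ hlt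
  have heq2 : I.map (algebraMap A (S ⧸ J₀)) =
      (I.map (algebraMap A S)).map (Ideal.Quotient.mkₐ A J₀) := hmapmap
  refine isNoetherian_of_linearEquiv (σ := RingHom.id A) (σ' := RingHom.id A) (M := S ⧸ (J₀ ⊔ I.map (algebraMap A S))) ?_
  exact (heq2 ▸ (DoubleQuot.quotQuotEquivQuotSupₐ A J₀ (I.map (algebraMap A S))).toLinearEquiv).symm


theorem RingHom.Finite.prod' {A B C : Type*} [CommRing A] [CommRing B] [CommRing C]
    {f : A →+* B} {g : A →+* C} (hf : f.Finite) (hg : g.Finite) : (f.prod g).Finite := by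
  classical
  letI iB := f.toAlgebra
  letI iC := g.toAlgebra
  letI iP := (f.prod g).toAlgebra
  haveI : Module.Finite A B := hf
  haveI : Module.Finite A C := hg
  obtain ⟨tB, htB⟩ := Module.finite_def.mp (inferInstance : Module.Finite A B)
  obtain ⟨tC, htC⟩ := Module.finite_def.mp (inferInstance : Module.Finite A C)
  constructor
  refine ⟨tB.image (·, (0:C)) ∪ tC.image ((0:B), ·), eq_top_iff.mpr ?_⟩
  set G : Set (B × C) := ↑(tB.image (·, (0:C)) ∪ tC.image ((0:B), ·)) with hG
  rintro ⟨b, c⟩ -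
  have hsmulB : ∀ (a : A) (x : B), (a • x, (0:C)) = a • ((x, 0) : B × C) := by
    intro a x
    show (f a * x, (0:C)) = (f.prod g) a * (x, 0)
    ext <;> simp
  have hsmulC : ∀ (a : A) (x : C), ((0:B), a • x) = a • (((0:B), x) : B × C) := by
    intro a x
    show ((0:B), g a * x) = (f.prod g) a * (0, x)
    ext <;> simp
  have hb : ((b, (0:C)) : B × C) ∈ Submodule.span A G := by
    have hmem : b ∈ Submodule.span A (tB : Set B) := htB ▸ Submodule.mem_top
    refine Submodule.span_induction (fun y hy => Submodule.subset_span ?_)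
      (by exact Submodule.zero_mem (Submodule.span A G))
      (fun y z _ _ hy hz => by simpa using Submodule.add_mem _ hy hz)
      (fun a y _ hy => by rw [hsmulB]; exact Submodule.smul_mem _ a hy) hmem
    · rw [hG]
      simp only [Finset.coe_union, Set.mem_union, Finset.coe_image, Set.mem_image]
      exact Or.inl ⟨y, hy, rfl⟩
  have hc : (((0:B), c) : B × C) ∈ Submodule.span A G := by
    have hmem : c ∈ Submodule.span A (tC : Set C) := htC ▸ Submodule.mem_top
    refine Submodule.span_induction (fun y hy => Submodule.subset_span ?_)
      (by exact Submodule.zero_mem (Submodule.span A G))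
      (fun y z _ _ hy hz => by simpa using Submodule.add_mem _ hy hz)
      (fun a y _ hy => by rw [hsmulC]; exact Submodule.smul_mem _ a hy) hmem
    · rw [hG]
      simp only [Finset.coe_union, Set.mem_union, Finset.coe_image, Set.mem_image]
      exact Or.inr ⟨y, hy, rfl⟩
  have : ((b, c) : B × C) = (b, 0) + (0, c) := by ext <;> simp
  rw [this]
  exact Submodule.add_mem _ hb hc


set_option maxHeartbeats 1000000 in
/-- If `f` and `g` are finite ring homomorphisms, the following are equivalent:
(1) `A ⋈^{f,g} (𝔟,𝔠)` is Noetherian; (2) `B` and `C` are Noetherian;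
(3) `A/𝔨` is Noetherian, where `𝔨 = ker f ∩ ker g`. -/
theorem biAmalgamation_noetherian_tfae {A B C : Type*} [CommRing A] [CommRing B] [CommRing C]
    (f : A →+* B) (g : A →+* C) (𝔟 : Ideal B) (𝔠 : Ideal C)
    (hcomp : 𝔟.comap f = 𝔠.comap g)
    (hf : f.Finite) (hg : g.Finite) :
    List.TFAE [IsNoetherianRing ↥(biAmalgamation f g 𝔟 𝔠),
               IsNoetherianRing B ∧ IsNoetherianRing C,
               IsNoetherianRing (A ⧸ (RingHom.ker f ⊓ RingHom.ker g))] := by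
  set D := biAmalgamation f g 𝔟 𝔠 with hD
  have hmemD : ∀ a : A, (f a, g a) ∈ D := fun a =>
    ⟨a, 0, 0, 𝔟.zero_mem, 𝔠.zero_mem, by simp⟩
  let φD : A →+* D := ((f.prod g).codRestrict D.toSubsemiring fun a => hmemD a)
  have hφ : (f.prod g).Finite := RingHom.Finite.prod' hf hg
  have hcompD : D.subtype.comp φD = f.prod g := RingHom.ext fun a => rfl
  have hDfin : D.subtype.Finite :=
    RingHom.Finite.of_comp_finite (f := φD) (hcompD ▸ hφ)
  have hker : RingHom.ker (f.prod g) = RingHom.ker f ⊓ RingHom.ker g := by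
    ext a
    simp [RingHom.mem_ker, Prod.ext_iff, Submodule.mem_inf]
  tfae_have 1 → 2
  | hDnoeth => by
    constructor
    · letI : Algebra ↥D B := ((RingHom.fst B C).comp D.subtype).toAlgebra
      haveI : Module.Finite ↥D B :=
        RingHom.Finite.comp (RingHom.Finite.of_surjective _ Prod.fst_surjective) hDfin
      haveI : IsNoetherianRing ↥D := hDnoeth
      haveI : IsNoetherian ↥D B := isNoetherian_of_isNoetherianRing_of_finite _ _
      exact isNoetherianRing_iff.mpr (isNoetherian_of_tower ↥D (by assumption))
    · letI : Algebra ↥D C := ((RingHom.snd B C).comp D.subtype).toAlgebra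
      haveI : Module.Finite ↥D C :=
        RingHom.Finite.comp (RingHom.Finite.of_surjective _ Prod.snd_surjective) hDfin
      haveI : IsNoetherianRing ↥D := hDnoeth
      haveI : IsNoetherian ↥D C := isNoetherian_of_isNoetherianRing_of_finite _ _
      exact isNoetherianRing_iff.mpr (isNoetherian_of_tower ↥D (by assumption))
  tfae_have 2 → 3
  | ⟨hB, hC⟩ => by
    letI : Algebra A (B × C) := (f.prod g).toAlgebra
    haveI : Module.Finite A (B × C) := hφ
    haveI : IsNoetherianRing (B × C) := by
      haveI := hB; haveI := hC
      letI : Algebra (B × C) B := (RingHom.fst B C).toAlgebra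
      letI : Algebra (B × C) C := (RingHom.snd B C).toAlgebra
      haveI h1 : IsNoetherian (B × C) B :=
        isNoetherian_of_surjective_algebraMap Prod.fst_surjective
          (isNoetherianRing_iff.mp hB)
      haveI h2 : IsNoetherian (B × C) C :=
        isNoetherian_of_surjective_algebraMap Prod.snd_surjective
          (isNoetherianRing_iff.mp hC)
      exact isNoetherianRing_iff.mpr (isNoetherian_prod (M := B) (N := C))
    haveI hN : IsNoetherian A (B × C) := eakinNagata
    have hkerlin : LinearMap.ker (Algebra.linearMap A (B × C)) =
        ((RingHom.ker f ⊓ RingHom.ker g : Ideal A) : Submodule A A) := by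
      rw [← hker]
      ext a
      simp [RingHom.mem_ker, RingHom.algebraMap_toAlgebra]
    haveI : IsNoetherian A (A ⧸ (RingHom.ker f ⊓ RingHom.ker g)) := by
      rw [← hkerlin]
      exact isNoetherian_of_linearEquiv
        (LinearMap.quotKerEquivRange (Algebra.linearMap A (B × C))).symm
    exact isNoetherianRing_iff.mpr (isNoetherian_of_tower A (by assumption))
  tfae_have 3 → 1
  | hA' => by
    letI : Algebra A (B × C) := (f.prod g).toAlgebra
    haveI : Module.Finite A (B × C) := hφ
    set 𝔨 : Ideal A := RingHom.ker f ⊓ RingHom.ker g with h𝔨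
    have hlift : ∀ a ∈ 𝔨, (f.prod g) a = 0 := by
      intro a ha
      rw [← hker] at ha
      exact ha
    letI : Algebra (A ⧸ 𝔨) (B × C) := (Ideal.Quotient.lift 𝔨 (f.prod g) hlift).toAlgebra
    haveI : IsScalarTower A (A ⧸ 𝔨) (B × C) := IsScalarTower.of_algebraMap_eq fun a => by
      rw [RingHom.algebraMap_toAlgebra, RingHom.algebraMap_toAlgebra,
        Ideal.Quotient.algebraMap_eq, Ideal.Quotient.lift_mk]
    haveI : Module.Finite (A ⧸ 𝔨) (B × C) := Module.Finite.of_restrictScalars_finite A _ _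
    haveI : IsNoetherianRing (A ⧸ 𝔨) := hA'
    haveI hN : IsNoetherian (A ⧸ 𝔨) (B × C) := isNoetherian_of_isNoetherianRing_of_finite _ _
    -- embed ideals of D into (A ⧸ 𝔨)-submodules of B × C
    have hsmul : ∀ (a : A) (x : B × C),
        (Ideal.Quotient.mk 𝔨 a) • x = ((f a, g a) : B × C) * x := by
      intro a x
      rw [Algebra.smul_def, RingHom.algebraMap_toAlgebra, Ideal.Quotient.lift_mk]
      rfl
    let E : Ideal ↥D → Submodule (A ⧸ 𝔨) (B × C) := fun I =>
      { carrier := (↑) '' (I : Set ↥D)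
        add_mem' := by
          rintro x y ⟨x', hx', rfl⟩ ⟨y', hy', rfl⟩
          exact ⟨x' + y', I.add_mem hx' hy', rfl⟩
        zero_mem' := ⟨0, I.zero_mem, rfl⟩
        smul_mem' := by
          rintro q x ⟨x', hx', rfl⟩
          obtain ⟨a, rfl⟩ := Ideal.Quotient.mk_surjective q
          rw [hsmul]
          exact ⟨(⟨(f a, g a), hmemD a⟩ : ↥D) * x', I.mul_mem_left _ hx', rfl⟩ }
    have hE_le : ∀ I J : Ideal ↥D, E I ≤ E J ↔ I ≤ J := by
      intro I J
      constructor
      · intro hle x hx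
        obtain ⟨y, hy, hxy⟩ := hle ⟨x, hx, rfl⟩
        rwa [show y = x from Subtype.coe_injective hxy] at hy
      · rintro hIJ x ⟨x', hx', rfl⟩
        exact ⟨x', hIJ hx', rfl⟩
    let Eemb : Ideal ↥D ↪o Submodule (A ⧸ 𝔨) (B × C) :=
      { toFun := E
        inj' := fun I J hIJ => le_antisymm ((hE_le I J).mp hIJ.le) ((hE_le J I).mp hIJ.ge)
        map_rel_iff' := fun {I J} => hE_le I J }
    refine isNoetherianRing_iff.mpr (isNoetherian_mk ⟨?_⟩)
    exact Eemb.dual.wellFounded hN.wellFoundedGT.wf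
  tfae_finish
end

section
/- Assume condition (*): f(π⁻¹(Reg(A/𝔦₀))) ⊆ Reg(B) and g(π⁻¹(Reg(A/𝔦₀))) ⊆ Reg(C), where π : A → A/𝔦₀ is the canonical projection and Reg(R) denotes the set of non-zero-divisors of a ring R. If A⋈^{f,g}(𝔟,𝔠) is a Prüfer ring, then A/𝔦₀ is a Prüfer ring. -/
/-- A commutative ring `R` is a Prüfer ring if every finitely generated ideal containing
a non-zero-divisor is invertible: there is an `R`-submodule `F` of the total ring of
fractions of `R` with `I·F` equal to the unit submodule. -/
def IsPruferRing (R : Type*) [CommRing R] : Prop :=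
  ∀ I : Ideal R, I.FG → (∃ r ∈ I, r ∈ nonZeroDivisors R) →
    ∃ F : Submodule R (FractionRing R),
      Submodule.map (Algebra.linearMap R (FractionRing R)) I * F = 1

lemma lemA {R : Type*} [CommRing R] (I : Ideal R) (r : R) (hrI : r ∈ I)
    (F : Submodule R (FractionRing R))
    (hF : Submodule.map (Algebra.linearMap R (FractionRing R)) I * F = 1) :
    r ∈ I * (Ideal.span {r}).colon I := by
  set K := FractionRing R
  set lin := Algebra.linearMap R K with hlin
  have hinj : Function.Injective (algebraMap R K) := IsFractionRing.injective R K
  have h1 : (1 : K) ∈ Submodule.map lin I * F := by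
    rw [hF]; exact Submodule.one_le.mp le_rfl
  have key : algebraMap R K r * 1 ∈
      Submodule.map lin ((I * (Ideal.span {r}).colon I : Ideal R) : Submodule R R) := by
    refine Submodule.mul_induction_on h1 ?_ ?_
    · rintro m ⟨a, haI, rfl⟩ n hnF
      -- find t with algebraMap t = algebraMap r * n
      have hrn : algebraMap R K r * n ∈ (1 : Submodule R K) := by
        rw [← hF]
        exact Submodule.mul_mem_mul (Submodule.mem_map_of_mem hrI) hnF
      obtain ⟨t, ht⟩ := Submodule.mem_one.mp hrn
      have htT : t ∈ (Ideal.span {r}).colon I := by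
        rw [Submodule.mem_colon]
        intro p hpI
        have hpn : algebraMap R K p * n ∈ (1 : Submodule R K) := by
          rw [← hF]
          exact Submodule.mul_mem_mul (Submodule.mem_map_of_mem hpI) hnF
        obtain ⟨c, hc⟩ := Submodule.mem_one.mp hpn
        have : t * p = r * c := by
          apply hinj
          rw [map_mul, map_mul, ht, hc]; ring
        rw [smul_eq_mul, this]
        exact Ideal.mem_span_singleton.mpr ⟨c, rfl⟩
      have : algebraMap R K r * (lin a * n) = lin (a * t) := by
        simp only [hlin, Algebra.linearMap_apply, map_mul]
        rw [ht]; ring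
      rw [this]
      exact Submodule.mem_map_of_mem (Ideal.mul_mem_mul haI htT)
    · intro x y hx hy
      rw [mul_add]
      exact Submodule.add_mem _ hx hy
  rw [mul_one] at key
  obtain ⟨w, hw, hweq⟩ := key
  have : w = r := hinj hweq
  exact this ▸ hw

lemma lemB {R : Type*} [CommRing R] (I : Ideal R) (r : R) (hreg : r ∈ nonZeroDivisors R)
    (h : r ∈ I * (Ideal.span {r}).colon I) :
    ∃ F : Submodule R (FractionRing R),
      Submodule.map (Algebra.linearMap R (FractionRing R)) I * F = 1 := by
  set K := FractionRing R
  set lin := Algebra.linearMap R K with hlin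
  have hu : IsUnit (algebraMap R K r) := IsLocalization.map_units K ⟨r, hreg⟩
  set v := hu.unit with hv
  have hvr : (v : K) = algebraMap R K r := hu.unit_spec
  have hrv : algebraMap R K r * (↑v⁻¹ : K) = 1 := by rw [← hvr]; exact v.mul_inv
  refine ⟨Submodule.map lin ((Ideal.span {r}).colon I : Submodule R R)
    * Submodule.span R {(↑v⁻¹ : K)}, ?_⟩
  apply le_antisymm
  · rw [Submodule.mul_le]
    rintro x ⟨a, haI, rfl⟩ y hy
    refine Submodule.mul_induction_on hy ?_ ?_
    · rintro m ⟨t, htT, rfl⟩ n hn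
      obtain ⟨c, hc⟩ := Submodule.mem_span_singleton.mp hn
      have hat : t * a ∈ Ideal.span {r} := by
        have := Submodule.mem_colon.mp htT a haI
        rwa [smul_eq_mul] at this
      obtain ⟨d, hd⟩ := Ideal.mem_span_singleton.mp hat
      have e1 : algebraMap R K (t * a) * (↑v⁻¹ : K) = algebraMap R K d := by
        rw [hd, map_mul, mul_comm ((algebraMap R K) r), mul_assoc, hrv, mul_one]
      have : lin a * (lin t * n) = c • algebraMap R K d := by
        rw [← hc]
        simp only [hlin, Algebra.linearMap_apply]
        rw [Algebra.smul_def, Algebra.smul_def, ← e1, map_mul]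
        ring
      rw [this]
      exact Submodule.smul_mem _ _ (Submodule.mem_one.mpr ⟨d, rfl⟩)
    · intro x y hx hy
      rw [mul_add]
      exact Submodule.add_mem _ hx hy
  · rw [Submodule.one_le, ← hrv]
    have : ∀ w ∈ I * (Ideal.span {r}).colon I, algebraMap R K w * (↑v⁻¹ : K) ∈
        Submodule.map lin I *
          (Submodule.map lin ((Ideal.span {r}).colon I : Submodule R R)
            * Submodule.span R {(↑v⁻¹ : K)}) := by
      intro w hw
      refine Submodule.mul_induction_on hw ?_ ?_
      · intro x hx t ht
        have : algebraMap R K (x * t) * (↑v⁻¹ : K) = lin x * (lin t * ↑v⁻¹) := by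
          simp only [hlin, Algebra.linearMap_apply, map_mul]; ring
        rw [this]
        exact Submodule.mul_mem_mul (Submodule.mem_map_of_mem hx)
          (Submodule.mul_mem_mul (Submodule.mem_map_of_mem ht)
            (Submodule.mem_span_singleton_self _))
      · intro x y hx hy
        rw [map_add, add_mul]
        exact Submodule.add_mem _ hx hy
    exact this r h



section
variable {A B C : Type*} [CommRing A] [CommRing B] [CommRing C]
  (f : A →+* B) (g : A →+* C) (𝔟 : Ideal B) (𝔠 : Ideal C)

/-- The diagonal element `(f a, g a)` of the bi-amalgamation. -/
def biDiag (a : A) : ↥(biAmalgamation f g 𝔟 𝔠) :=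
  ⟨(f a, g a), ⟨a, 0, 0, 𝔟.zero_mem, 𝔠.zero_mem, by simp⟩⟩

/-- Auxiliary: the first-component quotient map. -/
def biQ : ↥(biAmalgamation f g 𝔟 𝔠) →+* B ⧸ 𝔟 :=
  (Ideal.Quotient.mk 𝔟).comp ((RingHom.fst B C).comp (biAmalgamation f g 𝔟 𝔠).subtype)

lemma biQ_exists (x : ↥(biAmalgamation f g 𝔟 𝔠)) :
    ∃ abar : A ⧸ 𝔟.comap f, Ideal.quotientMap 𝔟 f le_rfl abar = biQ f g 𝔟 𝔠 x := by
  obtain ⟨a, β, γ, hβ, hγ, hx⟩ := x.2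
  refine ⟨Ideal.Quotient.mk _ a, ?_⟩
  rw [Ideal.quotientMap_mk]
  have h1 : biQ f g 𝔟 𝔠 x = Ideal.Quotient.mk 𝔟 (f a + β) := by
    show Ideal.Quotient.mk 𝔟 (x : B × C).1 = _
    rw [hx]
  rw [h1]
  rw [Ideal.Quotient.eq]
  simpa using 𝔟.neg_mem hβ
  
noncomputable def biRho0 (x : ↥(biAmalgamation f g 𝔟 𝔠)) : A ⧸ 𝔟.comap f :=
  Function.invFun (Ideal.quotientMap 𝔟 f le_rfl) (biQ f g 𝔟 𝔠 x)

lemma biRho0_spec (x : ↥(biAmalgamation f g 𝔟 𝔠)) :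
    Ideal.quotientMap 𝔟 f le_rfl (biRho0 f g 𝔟 𝔠 x) = biQ f g 𝔟 𝔠 x :=
  Function.invFun_eq (biQ_exists f g 𝔟 𝔠 x)

set_option synthInstance.maxHeartbeats 1000000 in
noncomputable def biRho : ↥(biAmalgamation f g 𝔟 𝔠) →+* A ⧸ 𝔟.comap f where
  toFun := biRho0 f g 𝔟 𝔠
  map_one' := Ideal.quotientMap_injective (by
    rw [biRho0_spec, map_one (Ideal.quotientMap 𝔟 f le_rfl), RingHom.map_one (biQ f g 𝔟 𝔠)])
  map_mul' x y := Ideal.quotientMap_injective (by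
    rw [biRho0_spec, map_mul (Ideal.quotientMap 𝔟 f le_rfl), biRho0_spec, biRho0_spec,
      RingHom.map_mul (biQ f g 𝔟 𝔠)])
  map_zero' := Ideal.quotientMap_injective (by
    rw [biRho0_spec, map_zero (Ideal.quotientMap 𝔟 f le_rfl), RingHom.map_zero (biQ f g 𝔟 𝔠)])
  map_add' x y := Ideal.quotientMap_injective (by
    rw [biRho0_spec, map_add (Ideal.quotientMap 𝔟 f le_rfl), biRho0_spec, biRho0_spec,
      RingHom.map_add (biQ f g 𝔟 𝔠)])

lemma biRho_diag (a : A) :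
    biRho f g 𝔟 𝔠 (biDiag f g 𝔟 𝔠 a) = Ideal.Quotient.mk (𝔟.comap f) a :=
  Ideal.quotientMap_injective (by
    show Ideal.quotientMap 𝔟 f le_rfl (biRho0 f g 𝔟 𝔠 _) = _
    rw [biRho0_spec, Ideal.quotientMap_mk]
    rfl)

lemma biRho_surjective : Function.Surjective (biRho f g 𝔟 𝔠) := by
  intro abar
  obtain ⟨a, rfl⟩ := Ideal.Quotient.mk_surjective abar
  exact ⟨biDiag f g 𝔟 𝔠 a, biRho_diag f g 𝔟 𝔠 a⟩

lemma biDiag_regular (r : A) (h1 : f r ∈ nonZeroDivisors B) (h2 : g r ∈ nonZeroDivisors C) :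
    biDiag f g 𝔟 𝔠 r ∈ nonZeroDivisors ↥(biAmalgamation f g 𝔟 𝔠) := by
  rw [mem_nonZeroDivisors_iff_right]
  intro x hx
  have h' : (x : B × C) * ((f r, g r) : B × C) = 0 := congrArg Subtype.val hx
  have h1' : (x : B × C).1 * f r = 0 := congrArg Prod.fst h'
  have h2' : (x : B × C).2 * g r = 0 := congrArg Prod.snd h'
  apply Subtype.ext
  exact Prod.ext (mem_nonZeroDivisors_iff_right.mp h1 _ h1') (mem_nonZeroDivisors_iff_right.mp h2 _ h2')

end

set_option synthInstance.maxHeartbeats 1000000 in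
set_option maxHeartbeats 4000000 in
/-- Condition (*): `f` and `g` map elements of `A` that are regular modulo `𝔦₀` to
regular elements. If `A ⋈^{f,g} (𝔟,𝔠)` is a Prüfer ring, then so is `A/𝔦₀`. -/
theorem biAmalgamation_prufer_quotient {A B C : Type*} [CommRing A] [CommRing B] [CommRing C]
    (f : A →+* B) (g : A →+* C) (𝔟 : Ideal B) (𝔠 : Ideal C)
    (hcomp : 𝔟.comap f = 𝔠.comap g)
    (hregf : ∀ a : A, Ideal.Quotient.mk (𝔟.comap f) a ∈ nonZeroDivisors (A ⧸ 𝔟.comap f) →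
      f a ∈ nonZeroDivisors B)
    (hregg : ∀ a : A, Ideal.Quotient.mk (𝔟.comap f) a ∈ nonZeroDivisors (A ⧸ 𝔟.comap f) →
      g a ∈ nonZeroDivisors C)
    (hP : IsPruferRing ↥(biAmalgamation f g 𝔟 𝔠)) :
    IsPruferRing (A ⧸ 𝔟.comap f) := by
  classical
  intro I hIfg hex
  obtain ⟨rbar, hrI, hreg⟩ := hex
  obtain ⟨G, hG⟩ := hIfg
  have hsurj := biRho_surjective f g 𝔟 𝔠
  set ρ := biRho f g 𝔟 𝔠 with hρ
  obtain ⟨r, hr⟩ := Ideal.Quotient.mk_surjective rbar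
  have hfr := hregf r (by rwa [hr])
  have hgr := hregg r (by rwa [hr])
  have hs0reg := biDiag_regular f g 𝔟 𝔠 r hfr hgr
  set s0 := biDiag f g 𝔟 𝔠 r with hs0
  have hρs0 : ρ s0 = rbar := (biRho_diag f g 𝔟 𝔠 r).trans hr
  set sec : (A ⧸ 𝔟.comap f) → ↥(biAmalgamation f g 𝔟 𝔠) := Function.surjInv hsurj with hsec
  set H : Finset ↥(biAmalgamation f g 𝔟 𝔠) := insert s0 (G.image sec) with hH
  set J : Ideal ↥(biAmalgamation f g 𝔟 𝔠) := Ideal.span (H : Set _) with hJ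
  have hs0J : s0 ∈ J := Ideal.subset_span (by simp [hH])
  obtain ⟨F, hF⟩ := hP J ⟨H, rfl⟩ ⟨s0, hs0J, hs0reg⟩
  have hmem := lemA J s0 hs0J F hF
  have hmapJ : Ideal.map ρ J = I := by
    rw [hJ, Ideal.map_span]
    have himg : ⇑ρ '' (H : Set _) = insert rbar (G : Set _) := by
      rw [hH, Finset.coe_insert, Set.image_insert_eq, hρs0, Finset.coe_image,
        Set.image_image]
      congr 1
      have : (fun a => ρ (sec a)) = id := by
        funext a
        exact Function.surjInv_eq hsurj a
      rw [this, Set.image_id]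
    rw [himg]
    apply le_antisymm
    · rw [Ideal.span_le]
      rintro x (rfl | hx)
      · exact hrI
      · rw [← hG]; exact Ideal.subset_span hx
    · rw [← hG]; exact Ideal.span_mono (Set.subset_insert _ _)
  have hmapT : Ideal.map ρ ((Ideal.span {s0}).colon J) ≤ (Ideal.span {rbar}).colon I := by
    rw [Ideal.map_le_iff_le_comap]
    intro t ht
    rw [Ideal.mem_comap, Submodule.mem_colon]
    intro p hp
    rw [← hmapJ] at hp
    obtain ⟨x, hxJ, rfl⟩ := (Ideal.mem_map_iff_of_surjective ρ hsurj).mp hp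
    have hts : t * x ∈ Ideal.span {s0} := Submodule.mem_colon.mp ht x hxJ
    obtain ⟨d, hd⟩ := Ideal.mem_span_singleton.mp hts
    have : ρ t • ρ x = ρ (t * x) := (map_mul ρ t x).symm
    rw [this, hd, map_mul, hρs0]
    exact Ideal.mem_span_singleton.mpr ⟨ρ d, rfl⟩
  apply lemB I rbar hreg
  have hmm : rbar ∈ Ideal.map ρ (J * (Ideal.span {s0}).colon J) := by
    rw [← hρs0]
    exact Ideal.mem_map_of_mem ρ hmem
  rw [Ideal.map_mul, hmapJ] at hmm
  exact Ideal.mul_mono_right hmapT hmm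
end

section
/- Assume that A⋈^{f,g}(𝔟,𝔠) is a Prüfer ring. Let 𝔞 be an ideal of A, let p : A → A/𝔞 be the canonical projection, and assume f(p⁻¹(Reg(A/𝔞))) ⊆ Reg(B) and g(p⁻¹(Reg(A/𝔞))) ⊆ Reg(C), where Reg(R) denotes the set of non-zero-divisors of a ring R. If g is surjective and ker(g) ⊆ 𝔞, then A/𝔞 is a Prüfer ring. -/
lemma exists_list_of_mem_mul {R Q : Type*} [CommRing R] [CommRing Q] [Algebra R Q]
    {I : Ideal R} {F : Submodule R Q} {x : Q}
    (hx : x ∈ Submodule.map (Algebra.linearMap R Q) I * F) :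
    ∃ l : List (R × Q), (∀ p ∈ l, p.1 ∈ I ∧ p.2 ∈ F) ∧
      (l.map fun p => algebraMap R Q p.1 * p.2).sum = x := by
  refine Submodule.mul_induction_on hx ?_ ?_
  · rintro m ⟨y, hy, rfl⟩ n hn
    exact ⟨[(y, n)], by simpa using ⟨hy, hn⟩, by simp⟩
  · rintro x y ⟨l₁, h₁, s₁⟩ ⟨l₂, h₂, s₂⟩
    refine ⟨l₁ ++ l₂, ?_, by simp [s₁, s₂]⟩
    intro p hp
    rcases List.mem_append.mp hp with h | h
    · exact h₁ p h
    · exact h₂ p h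

lemma isPruferRing_of_surjective {R S : Type*} [CommRing R] [CommRing S] (h : R →+* S)
    (hsurj : Function.Surjective h)
    (hreg : ∀ s ∈ nonZeroDivisors S, ∃ r ∈ nonZeroDivisors R, h r = s)
    (hP : IsPruferRing R) : IsPruferRing S := by
  intro J hJfg hJreg
  obtain ⟨r', hr'J, hr'⟩ := hJreg
  obtain ⟨T, hT⟩ := hJfg
  obtain ⟨r, hrreg, hrr⟩ := hreg r' hr'
  classical
  have hsurj2 := hsurj
  choose lift hlift using hsurj2
  set I : Ideal R := Ideal.span (insert r (lift '' ↑T)) with hI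
  have hrI : r ∈ I := Ideal.subset_span (Set.mem_insert _ _)
  have hmap : I.map h = J := by
    rw [hI, Ideal.map_span, Set.image_insert_eq, hrr]
    have himg : h '' (lift '' ↑T) = ↑T := by
      ext y; simp only [Set.mem_image, exists_exists_and_eq_and, hlift]
      exact ⟨fun ⟨a, ha, e⟩ => e ▸ ha, fun hy => ⟨y, hy, rfl⟩⟩
    rw [himg]
    rw [← hT] at hr'J ⊢
    exact Submodule.span_insert_eq_span hr'J
  have hIfg : I.FG := ⟨insert r (T.image lift), by
    rw [Finset.coe_insert, Finset.coe_image, hI]⟩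
  obtain ⟨F, hF⟩ := hP I hIfg ⟨r, hrI, hrreg⟩
  set Q := FractionRing R
  set ι := algebraMap R Q with hι
  have h1 : (1 : Q) ∈ Submodule.map (Algebra.linearMap R Q) I * F := by
    rw [hF]; exact Submodule.one_le.mp le_rfl
  obtain ⟨l, hl, hlsum⟩ := exists_list_of_mem_mul h1
  have hrιI : ι r ∈ Submodule.map (Algebra.linearMap R Q) I :=
    Submodule.mem_map_of_mem hrI
  -- choose a
  have key : ∀ p : R × Q, ∃ a : R, p ∈ l → ι a = ι r * p.2 := by
    intro p
    by_cases hp : p ∈ l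
    · have : ι r * p.2 ∈ (1 : Submodule R Q) := by
        rw [← hF]; exact Submodule.mul_mem_mul hrιI (hl p hp).2
      obtain ⟨a, ha⟩ := Submodule.mem_one.mp this
      exact ⟨a, fun _ => ha⟩
    · exact ⟨0, fun hc => absurd hc hp⟩
  choose a ha using key
  have hinj : Function.Injective ι := IsFractionRing.injective R Q
  -- r = ∑ p.1 * a p
  have hrsum : r = (l.map fun p => p.1 * a p).sum := by
    apply hinj
    rw [map_list_sum, List.map_map]
    have : (l.map (ι ∘ fun p => p.1 * a p)) = l.map fun p => ι r * (ι p.1 * p.2) := by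
      refine List.map_congr_left fun p hp => ?_
      simp only [Function.comp_apply, map_mul, ha p hp]; ring
    rw [this, List.sum_map_mul_left, hlsum, mul_one]
  -- divisibility
  have hdvd : ∀ x ∈ I, ∀ p ∈ l, ∃ c, x * a p = r * c := by
    intro x hx p hp
    have : ι x * p.2 ∈ (1 : Submodule R Q) := by
      rw [← hF]; exact Submodule.mul_mem_mul (Submodule.mem_map_of_mem hx) (hl p hp).2
    obtain ⟨c, hc⟩ := Submodule.mem_one.mp this
    refine ⟨c, hinj ?_⟩
    rw [map_mul, map_mul, ha p hp, hc]; ring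
  -- now in S
  set Q' := FractionRing S
  set κ := algebraMap S Q' with hκ
  have hrS : h r ∈ nonZeroDivisors S := hrr ▸ hr'
  have u : IsUnit (κ (h r)) := IsLocalization.map_units Q' (⟨h r, hrS⟩ : nonZeroDivisors S)
  set v : Q' := ↑u.unit⁻¹ with hv
  have huv : κ (h r) * v = 1 := by rw [hv, IsUnit.mul_val_inv]
  set G : Set Q' := (fun p : R × Q => κ (h (a p)) * v) '' {p | p ∈ l} with hG
  refine ⟨Submodule.span S G, le_antisymm ?_ ?_⟩
  · refine Submodule.mul_le.mpr ?_
    rintro ξ ⟨y, hy, rfl⟩ η hη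
    rw [← hmap] at hy
    obtain ⟨x, hxI, rfl⟩ := (Ideal.mem_map_iff_of_surjective h hsurj).mp hy
    induction hη using Submodule.span_induction with
    | mem w hw =>
        obtain ⟨p, hp, rfl⟩ := hw
        obtain ⟨c, hc⟩ := hdvd x hxI p hp
        have : (Algebra.linearMap S Q') (h x) * (κ (h (a p)) * v) = κ (h c) := by
          simp only [Algebra.linearMap_apply, ← hκ]
          have e1 : κ (h x) * κ (h (a p)) = κ (h r) * κ (h c) := by
            rw [← map_mul, ← map_mul, ← map_mul, ← map_mul, hc]
          rw [← mul_assoc, e1, mul_right_comm, huv, one_mul]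
        rw [this]
        exact Submodule.mem_one.mpr ⟨h c, rfl⟩
    | zero => rw [mul_zero]; exact Submodule.zero_mem _
    | add w₁ w₂ _ _ ih₁ ih₂ => rw [mul_add]; exact Submodule.add_mem _ ih₁ ih₂
    | smul s w _ ih => rw [mul_smul_comm]; exact Submodule.smul_mem _ _ ih
  · rw [Submodule.one_eq_span, Submodule.span_le, Set.singleton_subset_iff]
    have h1eq : (1 : Q') = (l.map fun p =>
        (Algebra.linearMap S Q') (h p.1) * (κ (h (a p)) * v)).sum := by
      have : ∀ p ∈ l, (Algebra.linearMap S Q') (h p.1) * (κ (h (a p)) * v)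
          = κ (h (p.1 * a p)) * v := by
        intro p hp
        simp only [Algebra.linearMap_apply, ← hκ, map_mul]; ring
      rw [List.map_congr_left this]
      have heq2 : (l.map fun p => κ (h (p.1 * a p)) * v).sum
          = κ (h ((l.map fun p => p.1 * a p).sum)) * v := by
        rw [map_list_sum, map_list_sum, List.map_map, List.map_map, List.sum_map_mul_right]
        simp [Function.comp_def]
      rw [heq2, ← hrsum, huv]
    rw [h1eq]
    refine list_sum_mem fun w hw => ?_
    obtain ⟨p, hp, rfl⟩ := List.mem_map.mp hw
    refine Submodule.mul_mem_mul (Submodule.mem_map_of_mem ?_) (Submodule.subset_span ⟨p, hp, rfl⟩)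
    rw [← hmap]
    exact Ideal.mem_map_of_mem h (hl p hp).1

/-- If `A ⋈^{f,g} (𝔟,𝔠)` is Prüfer, `𝔞` is an ideal of `A`, `f`, `g` map elements of `A`
regular modulo `𝔞` to regular elements, `g` is surjective and `ker g ⊆ 𝔞`,
then `A/𝔞` is Prüfer. -/
theorem biAmalgamation_prufer_quotient_of_surjective {A B C : Type*}
    [CommRing A] [CommRing B] [CommRing C]
    (f : A →+* B) (g : A →+* C) (𝔟 : Ideal B) (𝔠 : Ideal C)
    (hcomp : 𝔟.comap f = 𝔠.comap g)
    (hP : IsPruferRing ↥(biAmalgamation f g 𝔟 𝔠))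
    (𝔞 : Ideal A)
    (hregf : ∀ a : A, Ideal.Quotient.mk 𝔞 a ∈ nonZeroDivisors (A ⧸ 𝔞) →
      f a ∈ nonZeroDivisors B)
    (hregg : ∀ a : A, Ideal.Quotient.mk 𝔞 a ∈ nonZeroDivisors (A ⧸ 𝔞) →
      g a ∈ nonZeroDivisors C)
    (hgsurj : Function.Surjective g) (hker : RingHom.ker g ≤ 𝔞) :
    IsPruferRing (A ⧸ 𝔞) := by
  have hker' : RingHom.ker g ≤ RingHom.ker (Ideal.Quotient.mk 𝔞) := by
    rw [Ideal.mk_ker]; exact hker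
  set q : C →+* A ⧸ 𝔞 := g.liftOfRightInverse (Function.surjInv hgsurj)
      (Function.rightInverse_surjInv hgsurj) ⟨Ideal.Quotient.mk 𝔞, hker'⟩ with hq
  have hq' : ∀ a : A, q (g a) = Ideal.Quotient.mk 𝔞 a := fun a =>
    g.liftOfRightInverse_comp_apply _ _ ⟨Ideal.Quotient.mk 𝔞, hker'⟩ a
  set R := biAmalgamation f g 𝔟 𝔠 with hR
  set h : ↥R →+* A ⧸ 𝔞 := q.comp ((RingHom.snd B C).comp R.subtype) with hh
  have hmem : ∀ a : A, ((f a, g a) : B × C) ∈ R :=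
    fun a => ⟨a, 0, 0, 𝔟.zero_mem, 𝔠.zero_mem, by simp⟩
  have hval : ∀ a : A, h ⟨(f a, g a), hmem a⟩ = Ideal.Quotient.mk 𝔞 a := fun a => hq' a
  apply isPruferRing_of_surjective h ?_ ?_ hP
  · intro s
    obtain ⟨a, rfl⟩ := Ideal.Quotient.mk_surjective s
    exact ⟨⟨(f a, g a), hmem a⟩, hval a⟩
  · intro s hs
    obtain ⟨a, rfl⟩ := Ideal.Quotient.mk_surjective s
    refine ⟨⟨(f a, g a), hmem a⟩, ?_, hval a⟩
    rw [mem_nonZeroDivisors_iff_right]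
    intro x hx
    have h1 : (x : B × C) * ((f a, g a) : B × C) = 0 := by
      have := congrArg Subtype.val hx
      simpa using this
    have hb : (x : B × C).1 * f a = 0 := by
      have := congrArg Prod.fst h1; simpa using this
    have hc : (x : B × C).2 * g a = 0 := by
      have := congrArg Prod.snd h1; simpa using this
    have hb0 : (x : B × C).1 = 0 := mem_nonZeroDivisors_iff_right.mp (hregf a hs) _ hb
    have hc0 : (x : B × C).2 = 0 := mem_nonZeroDivisors_iff_right.mp (hregg a hs) _ hc
    apply Subtype.ext
    rw [Prod.ext_iff]
    simpa using ⟨hb0, hc0⟩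
end

section
/- Assume that 𝔟 and 𝔠 are regular ideals (i.e., 𝔟 contains a non-zero-divisor of B and 𝔠 contains a non-zero-divisor of C). Then the following are equivalent: (1) A⋈^{f,g}(𝔟,𝔠) is a Prüfer ring; (2) B and C are Prüfer rings and 𝔟 = B. -/
set_option synthInstance.maxHeartbeats 1000000
set_option maxHeartbeats 4000000


open scoped nonZeroDivisors

/-- Elementwise characterization of the Prüfer invertibility condition w.r.t. a
localization model `K`. -/
def PruferCharOn (R : Type*) [CommRing R] (K : Type*) [CommRing K] [Algebra R K] : Prop :=
  ∀ I : Ideal R, I.FG → (∃ r ∈ I, r ∈ nonZeroDivisors R) →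
    ∃ l : List (R × K), (∀ p ∈ l, p.1 ∈ I) ∧
      (l.map fun p => algebraMap R K p.1 * p.2).sum = 1 ∧
      ∀ p ∈ l, ∀ x ∈ I, ∃ r : R, algebraMap R K x * p.2 = algebraMap R K r

theorem invertible_iff_char {R K : Type*} [CommRing R] [CommRing K] [Algebra R K] :
    (∀ I : Ideal R, I.FG → (∃ r ∈ I, r ∈ nonZeroDivisors R) →
      ∃ F : Submodule R K, Submodule.map (Algebra.linearMap R K) I * F = 1)
    ↔ PruferCharOn R K := by
  constructor
  · intro h I hfg hreg
    obtain ⟨F, hF⟩ := h I hfg hreg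
    have h1 : (1 : K) ∈ Submodule.map (Algebra.linearMap R K) I * F := by
      rw [hF]; exact Submodule.one_le.mp le_rfl
    have key : ∃ l : List (R × K), (∀ p ∈ l, p.1 ∈ I ∧ p.2 ∈ F) ∧
        (l.map fun p => algebraMap R K p.1 * p.2).sum = 1 := by
      refine Submodule.mul_induction_on
        (C := fun z => ∃ l : List (R × K), (∀ p ∈ l, p.1 ∈ I ∧ p.2 ∈ F) ∧
          (l.map fun p => algebraMap R K p.1 * p.2).sum = z) h1 ?_ ?_
      · rintro m hm n hn
        obtain ⟨x, hx, rfl⟩ := Submodule.mem_map.mp hm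
        exact ⟨[(x, n)], fun p hp => by
          simp only [List.mem_singleton] at hp; subst hp; exact ⟨hx, hn⟩, by
          simp [Algebra.linearMap_apply]⟩
      · rintro a b ⟨la, hla, hsa⟩ ⟨lb, hlb, hsb⟩
        exact ⟨la ++ lb, fun p hp => by
          rcases List.mem_append.mp hp with h | h
          exacts [hla p h, hlb p h], by
          rw [List.map_append, List.sum_append, hsa, hsb]⟩
    obtain ⟨l, hl, hs⟩ := key
    refine ⟨l, fun p hp => (hl p hp).1, hs, ?_⟩
    intro p hp x hx
    have : algebraMap R K x * p.2 ∈ (1 : Submodule R K) := by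
      rw [← hF]
      exact Submodule.mul_mem_mul (Submodule.mem_map.mpr ⟨x, hx, rfl⟩) (hl p hp).2
    obtain ⟨r, hr⟩ := Submodule.mem_one.mp this
    exact ⟨r, hr.symm⟩
  · intro h I hfg hreg
    obtain ⟨l, hmem, hsum, hinv⟩ := h I hfg hreg
    refine ⟨Submodule.span R {k | ∃ p ∈ l, p.2 = k}, le_antisymm ?_ ?_⟩
    · refine Submodule.mul_le.mpr ?_
      rintro m hm n hn
      obtain ⟨x, hx, rfl⟩ := Submodule.mem_map.mp hm
      rw [Algebra.linearMap_apply]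
      induction hn using Submodule.span_induction with
      | mem q hq =>
        obtain ⟨p, hp, rfl⟩ := hq
        obtain ⟨r, hr⟩ := hinv p hp x hx
        rw [hr]
        exact Submodule.mem_one.mpr ⟨r, rfl⟩
      | zero => rw [mul_zero]; exact Submodule.zero_mem _
      | add a b _ _ ha hb => rw [mul_add]; exact Submodule.add_mem _ ha hb
      | smul r a _ ha => rw [Algebra.mul_smul_comm]; exact Submodule.smul_mem _ r ha
    · rw [Submodule.one_le, ← hsum]
      refine list_sum_mem ?_
      intro k hk
      obtain ⟨p, hp, rfl⟩ := List.mem_map.mp hk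
      exact Submodule.mul_mem_mul (Submodule.mem_map.mpr ⟨p.1, hmem p hp, rfl⟩)
        (Submodule.subset_span ⟨p, hp, rfl⟩)
theorem charOn_congr {R K K' : Type*} [CommRing R] [CommRing K] [CommRing K']
    [Algebra R K] [Algebra R K'] (ε : K ≃ₐ[R] K') (h : PruferCharOn R K) :
    PruferCharOn R K' := by
  intro I hfg hreg
  obtain ⟨l, hmem, hsum, hinv⟩ := h I hfg hreg
  refine ⟨l.map fun p => (p.1, ε p.2), ?_, ?_, ?_⟩
  · rintro p hp
    obtain ⟨q, hq, rfl⟩ := List.mem_map.mp hp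
    exact hmem q hq
  · rw [List.map_map]
    have : ((fun p : R × K' => algebraMap R K' p.1 * p.2) ∘ fun p : R × K => (p.1, ε p.2))
        = fun p : R × K => ε (algebraMap R K p.1 * p.2) := by
      funext p
      simp [AlgEquiv.commutes]
    have h2 := map_list_sum (ε : K →+* K') (l.map fun p => algebraMap R K p.1 * p.2)
    rw [List.map_map] at h2
    rw [this]
    refine Eq.trans h2.symm ?_
    rw [hsum, map_one]
  · rintro p hp x hx
    obtain ⟨q, hq, rfl⟩ := List.mem_map.mp hp
    obtain ⟨r, hr⟩ := hinv q hq x hx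
    refine ⟨r, ?_⟩
    have := congrArg ε hr
    simpa [AlgEquiv.commutes] using this

theorem mem_nzd_of_ringEquiv {R S : Type*} [CommRing R] [CommRing S] (e : R ≃+* S) {r : R}
    (h : r ∈ nonZeroDivisors R) : e r ∈ nonZeroDivisors S := by
  rw [mem_nonZeroDivisors_iff_right]
  intro z hz
  have h2 : e.symm z * r = 0 := by
    apply e.injective
    simpa [map_mul] using hz
  have := mem_nonZeroDivisors_iff_right.mp h _ h2
  have := congrArg e this
  simpa using this

theorem isPruferRing_iff_charOn (R K : Type*) [CommRing R] [CommRing K] [Algebra R K]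
    [IsLocalization (nonZeroDivisors R) K] : IsPruferRing R ↔ PruferCharOn R K := by
  have h0 : IsPruferRing R ↔ PruferCharOn R (FractionRing R) := invertible_iff_char
  rw [h0]
  exact ⟨charOn_congr (IsLocalization.algEquiv (nonZeroDivisors R) (FractionRing R) K),
    charOn_congr (IsLocalization.algEquiv (nonZeroDivisors R) K (FractionRing R))⟩

theorem pruferCharOn_congr_base {R S K : Type*} [CommRing R] [CommRing S] [CommRing K]
    [Algebra R K] [Algebra S K] (e : R ≃+* S)
    (halg : ∀ r, algebraMap R K r = algebraMap S K (e r)) (h : PruferCharOn R K) :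
    PruferCharOn S K := by
  intro J hfg hreg
  have hIJ : J.comap (e : R →+* S) = J.map (e.symm : S →+* R) := by
    have h := Ideal.comap_symm (I := J) e.symm
    rwa [RingEquiv.symm_symm] at h
  have hfg' : (J.comap (e : R →+* S)).FG := by
    rw [hIJ]; exact Ideal.FG.map hfg _
  have hreg' : ∃ r ∈ J.comap (e : R →+* S), r ∈ nonZeroDivisors R := by
    obtain ⟨r, hrJ, hr⟩ := hreg
    refine ⟨e.symm r, Ideal.mem_comap.mpr (by simpa using hrJ), mem_nzd_of_ringEquiv e.symm hr⟩
  obtain ⟨l, hmem, hsum, hinv⟩ := h _ hfg' hreg'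
  refine ⟨l.map fun p => (e p.1, p.2), ?_, ?_, ?_⟩
  · rintro p hp
    obtain ⟨q, hq, rfl⟩ := List.mem_map.mp hp
    exact hmem q hq
  · rw [List.map_map]
    have : ((fun p : S × K => algebraMap S K p.1 * p.2) ∘ fun p : R × K => (e p.1, p.2))
        = fun p : R × K => algebraMap R K p.1 * p.2 := by
      funext p; simp [halg]
    rw [this, hsum]
  · rintro p hp x hx
    obtain ⟨q, hq, rfl⟩ := List.mem_map.mp hp
    obtain ⟨r, hr⟩ := hinv q hq (e.symm x) (Ideal.mem_comap.mpr (by simpa using hx))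
    refine ⟨e r, ?_⟩
    rw [← halg, ← hr, halg (e.symm x)]
    simp

theorem isPruferRing_congr {R S : Type*} [CommRing R] [CommRing S] (e : R ≃+* S)
    (h : IsPruferRing R) : IsPruferRing S := by
  letI : Algebra R (FractionRing S) :=
    ((algebraMap S (FractionRing S)).comp (e : R →+* S)).toAlgebra
  have halg : ∀ r, algebraMap R (FractionRing S) r = algebraMap S (FractionRing S) (e r) :=
    fun r => rfl
  haveI : IsLocalization (nonZeroDivisors R) (FractionRing S) := by
    constructor; constructor
    · rintro ⟨r, hr⟩
      exact IsLocalization.map_units (M := nonZeroDivisors S) (FractionRing S)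
        ⟨e r, mem_nzd_of_ringEquiv e hr⟩
    · intro z
      obtain ⟨⟨s, m⟩, hm⟩ := IsLocalization.surj (nonZeroDivisors S) z
      refine ⟨⟨e.symm s, ⟨e.symm m, mem_nzd_of_ringEquiv e.symm m.2⟩⟩, ?_⟩
      simpa [halg] using hm
    · intro r r'
      intro hrr
      rw [halg, halg] at hrr
      obtain ⟨c, hc⟩ := IsLocalization.exists_of_eq (M := nonZeroDivisors S) hrr
      refine ⟨⟨e.symm c, mem_nzd_of_ringEquiv e.symm c.2⟩, ?_⟩
      apply e.injective
      simpa [map_mul] using hc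
  rw [isPruferRing_iff_charOn S (FractionRing S)]
  exact pruferCharOn_congr_base e halg ((isPruferRing_iff_charOn R (FractionRing S)).mp h)

section
variable (B C : Type*) [CommRing B] [CommRing C]
theorem mem_nzd_prod {B C : Type*} [CommRing B] [CommRing C] {x : B × C} :
    x ∈ nonZeroDivisors (B × C) ↔ x.1 ∈ nonZeroDivisors B ∧ x.2 ∈ nonZeroDivisors C := by
  simp only [mem_nonZeroDivisors_iff_right]
  constructor
  · intro h
    constructor
    · intro z hz
      have := h (z, 0) (by ext <;> simp [hz])
      simpa [Prod.ext_iff] using this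
    · intro z hz
      have := h (0, z) (by ext <;> simp [hz])
      simpa [Prod.ext_iff] using this
  · rintro ⟨h1, h2⟩ z hz
    rw [Prod.ext_iff] at hz ⊢
    exact ⟨h1 z.1 hz.1, h2 z.2 hz.2⟩

noncomputable def prodAlgebra : Algebra (B × C) (FractionRing B × FractionRing C) :=
  ((algebraMap B (FractionRing B)).prodMap (algebraMap C (FractionRing C))).toAlgebra

theorem prod_isLocalization :
    letI := prodAlgebra B C
    IsLocalization (nonZeroDivisors (B × C)) (FractionRing B × FractionRing C) := by
  letI := prodAlgebra B C
  have halg : ∀ x : B × C, algebraMap (B × C) (FractionRing B × FractionRing C) x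
      = (algebraMap B (FractionRing B) x.1, algebraMap C (FractionRing C) x.2) := fun x => rfl
  constructor; constructor
  · rintro ⟨⟨u, v⟩, huv⟩
    obtain ⟨hu, hv⟩ := mem_nzd_prod.mp huv
    rw [halg]
    rw [isUnit_iff_exists]
    obtain ⟨a, ha1, ha2⟩ := isUnit_iff_exists.mp
      (IsLocalization.map_units (M := nonZeroDivisors B) (FractionRing B) ⟨u, hu⟩)
    obtain ⟨b, hb1, hb2⟩ := isUnit_iff_exists.mp
      (IsLocalization.map_units (M := nonZeroDivisors C) (FractionRing C) ⟨v, hv⟩)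
    exact ⟨(a, b), by ext <;> simp [ha1, hb1], by ext <;> simp [ha2, hb2]⟩
  · intro z
    obtain ⟨⟨b, m⟩, hm⟩ := IsLocalization.surj (nonZeroDivisors B) z.1
    obtain ⟨⟨c, n⟩, hn⟩ := IsLocalization.surj (nonZeroDivisors C) z.2
    refine ⟨⟨(b, c), ⟨(m, n), mem_nzd_prod.mpr ⟨m.2, n.2⟩⟩⟩, ?_⟩
    rw [halg]
    ext
    · simpa [halg] using hm
    · simpa [halg] using hn
  · intro r r' h
    rw [halg, halg, Prod.ext_iff] at h
    obtain ⟨c₁, hc₁⟩ := IsLocalization.exists_of_eq (M := nonZeroDivisors B) h.1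
    obtain ⟨c₂, hc₂⟩ := IsLocalization.exists_of_eq (M := nonZeroDivisors C) h.2
    exact ⟨⟨(c₁, c₂), mem_nzd_prod.mpr ⟨c₁.2, c₂.2⟩⟩, by ext <;> simp [hc₁, hc₂]⟩

theorem Ideal.FG.prodFG {B C : Type*} [CommRing B] [CommRing C] {I : Ideal B} {J : Ideal C}
    (h : I.FG) (h' : J.FG) : (I.prod J).FG := by
  classical
  obtain ⟨s, hs⟩ := h
  obtain ⟨t, ht⟩ := h'
  refine ⟨s.image (fun b => ((b, 0) : B × C)) ∪ t.image (fun c => ((0, c) : B × C)),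
    le_antisymm ?_ ?_⟩
  · rw [Ideal.span_le]
    intro p hp
    simp only [Finset.coe_union, Finset.coe_image, Set.mem_union, Set.mem_image] at hp
    rcases hp with ⟨b, hb, rfl⟩ | ⟨c, hc, rfl⟩
    · exact (Ideal.mem_prod _ _).mpr ⟨hs ▸ Ideal.subset_span hb, J.zero_mem⟩
    · exact (Ideal.mem_prod _ _).mpr ⟨I.zero_mem, ht ▸ Ideal.subset_span hc⟩
  · rintro ⟨x₁, x₂⟩ hx
    obtain ⟨hx1, hx2⟩ : x₁ ∈ I ∧ x₂ ∈ J := (Ideal.mem_prod _ _).mp hx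
    clear hx
    have h1 : ((x₁ : B), (0 : C)) ∈ (Ideal.span ↑(s.image (fun b => ((b, 0) : B × C)) ∪
        t.image (fun c => ((0, c) : B × C))) : Ideal (B × C)) := by
      rw [← hs] at hx1
      induction hx1 using Submodule.span_induction with
      | mem b hb =>
        apply Ideal.subset_span
        simp only [Finset.coe_union, Finset.coe_image, Set.mem_union, Set.mem_image]
        exact Or.inl ⟨b, hb, rfl⟩
      | zero => exact Ideal.zero_mem _
      | add a b _ _ ha hb => simpa using Ideal.add_mem _ ha hb
      | smul r a _ ha =>
        have := Ideal.mul_mem_left _ ((r, 0) : B × C) ha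
        simpa [smul_eq_mul] using this
    have h2 : ((0 : B), (x₂ : C)) ∈ (Ideal.span ↑(s.image (fun b => ((b, 0) : B × C)) ∪
        t.image (fun c => ((0, c) : B × C))) : Ideal (B × C)) := by
      rw [← ht] at hx2
      induction hx2 using Submodule.span_induction with
      | mem c hc =>
        apply Ideal.subset_span
        simp only [Finset.coe_union, Finset.coe_image, Set.mem_union, Set.mem_image]
        exact Or.inr ⟨c, hc, rfl⟩
      | zero => exact Ideal.zero_mem _
      | add a b _ _ ha hb => simpa using Ideal.add_mem _ ha hb
      | smul r a _ ha =>
        have := Ideal.mul_mem_left _ ((0, r) : B × C) ha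
        simpa [smul_eq_mul] using this
    have := Ideal.add_mem _ h1 h2
    simpa using this

theorem pruferCharOn_prod_iff :
    letI := prodAlgebra B C
    (PruferCharOn (B × C) (FractionRing B × FractionRing C) ↔
      PruferCharOn B (FractionRing B) ∧ PruferCharOn C (FractionRing C)) := by
  letI := prodAlgebra B C
  have halg : ∀ x : B × C, algebraMap (B × C) (FractionRing B × FractionRing C) x
      = (algebraMap B (FractionRing B) x.1, algebraMap C (FractionRing C) x.2) := fun _ => rfl
  constructor
  · intro h
    constructor
    · intro I₁ hfg hreg
      obtain ⟨r, hrI, hr⟩ := hreg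
      obtain ⟨l, hmem, hsum, hinv⟩ := h (I₁.prod ⊤) (hfg.prodFG ⟨{1}, by simp⟩)
        ⟨(r, 1), (Ideal.mem_prod _ _).mpr ⟨hrI, trivial⟩,
          mem_nzd_prod.mpr ⟨hr, Submonoid.one_mem _⟩⟩
      refine ⟨l.map fun p => (p.1.1, p.2.1), ?_, ?_, ?_⟩
      · rintro p hp
        obtain ⟨q, hq, rfl⟩ := List.mem_map.mp hp
        exact ((Ideal.mem_prod _ _).mp (hmem q hq)).1
      · rw [List.map_map]
        have h2 := (map_list_sum (AddMonoidHom.fst (FractionRing B) (FractionRing C))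
          (l.map fun p => algebraMap (B × C) (FractionRing B × FractionRing C) p.1 * p.2)).symm
        rw [List.map_map] at h2
        refine Eq.trans ?_ (h2.trans (by rw [hsum]; rfl))
        rfl
      · rintro p hp x hx
        obtain ⟨q, hq, rfl⟩ := List.mem_map.mp hp
        obtain ⟨r', hr'⟩ := hinv q hq (x, 0) ((Ideal.mem_prod _ _).mpr ⟨hx, trivial⟩)
        refine ⟨r'.1, ?_⟩
        have := congrArg Prod.fst hr'
        rw [halg, halg] at this
        simpa using this
    · intro I₂ hfg hreg
      obtain ⟨r, hrI, hr⟩ := hreg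
      obtain ⟨l, hmem, hsum, hinv⟩ := h ((⊤ : Ideal B).prod I₂) (Ideal.FG.prodFG ⟨{1}, by simp⟩ hfg)
        ⟨(1, r), (Ideal.mem_prod _ _).mpr ⟨trivial, hrI⟩,
          mem_nzd_prod.mpr ⟨Submonoid.one_mem _, hr⟩⟩
      refine ⟨l.map fun p => (p.1.2, p.2.2), ?_, ?_, ?_⟩
      · rintro p hp
        obtain ⟨q, hq, rfl⟩ := List.mem_map.mp hp
        exact ((Ideal.mem_prod _ _).mp (hmem q hq)).2
      · rw [List.map_map]
        have h2 := (map_list_sum (AddMonoidHom.snd (FractionRing B) (FractionRing C))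
          (l.map fun p => algebraMap (B × C) (FractionRing B × FractionRing C) p.1 * p.2)).symm
        rw [List.map_map] at h2
        refine Eq.trans ?_ (h2.trans (by rw [hsum]; rfl))
        rfl
      · rintro p hp x hx
        obtain ⟨q, hq, rfl⟩ := List.mem_map.mp hp
        obtain ⟨r', hr'⟩ := hinv q hq (0, x) ((Ideal.mem_prod _ _).mpr ⟨trivial, hx⟩)
        refine ⟨r'.2, ?_⟩
        have := congrArg Prod.snd hr'
        rw [halg, halg] at this
        simpa using this
  · rintro ⟨hB, hC⟩ I hfg hreg
    obtain ⟨r, hrI, hr⟩ := hreg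
    have hI : I = (I.map (RingHom.fst B C)).prod (I.map (RingHom.snd B C)) := Ideal.ideal_prod_eq I
    obtain ⟨l₁, hmem₁, hsum₁, hinv₁⟩ := hB (I.map (RingHom.fst B C)) (Ideal.FG.map hfg _)
      ⟨r.1, Ideal.mem_map_of_mem _ hrI, (mem_nzd_prod.mp hr).1⟩
    obtain ⟨l₂, hmem₂, hsum₂, hinv₂⟩ := hC (I.map (RingHom.snd B C)) (Ideal.FG.map hfg _)
      ⟨r.2, Ideal.mem_map_of_mem _ hrI, (mem_nzd_prod.mp hr).2⟩
    refine ⟨(l₁.map fun p => (((p.1, 0) : B × C),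
        ((p.2, 0) : FractionRing B × FractionRing C)))
      ++ (l₂.map fun p => (((0, p.1) : B × C),
        ((0, p.2) : FractionRing B × FractionRing C))), ?_, ?_, ?_⟩
    · rintro p hp
      rcases List.mem_append.mp hp with h | h <;> obtain ⟨q, hq, rfl⟩ := List.mem_map.mp h
      · rw [hI]; exact (Ideal.mem_prod _ _).mpr ⟨hmem₁ q hq, Ideal.zero_mem _⟩
      · rw [hI]; exact (Ideal.mem_prod _ _).mpr ⟨Ideal.zero_mem _, hmem₂ q hq⟩
    · rw [List.map_append, List.sum_append, List.map_map, List.map_map]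
      have e1 : ((fun p : (B × C) × (FractionRing B × FractionRing C) =>
            algebraMap (B × C) (FractionRing B × FractionRing C) p.1 * p.2) ∘
            fun p : B × FractionRing B => (((p.1, 0) : B × C), ((p.2, 0)
              : FractionRing B × FractionRing C)))
          = (AddMonoidHom.inl (FractionRing B) (FractionRing C)) ∘
            (fun p : B × FractionRing B => algebraMap B (FractionRing B) p.1 * p.2) := by
        funext p
        rw [Function.comp_apply, Function.comp_apply, halg]
        rw [Prod.ext_iff]
        constructor <;> simp
      have e2 : ((fun p : (B × C) × (FractionRing B × FractionRing C) =>
            algebraMap (B × C) (FractionRing B × FractionRing C) p.1 * p.2) ∘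
            fun p : C × FractionRing C => (((0, p.1) : B × C), ((0, p.2)
              : FractionRing B × FractionRing C)))
          = (AddMonoidHom.inr (FractionRing B) (FractionRing C)) ∘
            (fun p : C × FractionRing C => algebraMap C (FractionRing C) p.1 * p.2) := by
        funext p
        rw [Function.comp_apply, Function.comp_apply, halg]
        rw [Prod.ext_iff]
        constructor <;> simp
      rw [e1, e2, ← List.map_map, ← List.map_map, ← map_list_sum, ← map_list_sum,
        hsum₁, hsum₂]
      rw [Prod.ext_iff]
      constructor <;> simp
    · rintro p hp x hx
      rcases List.mem_append.mp hp with h | h <;> obtain ⟨q, hq, rfl⟩ := List.mem_map.mp h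
      · obtain ⟨r', hr'⟩ := hinv₁ q hq x.1 (Ideal.mem_map_of_mem _ hx)
        refine ⟨((r', 0) : B × C), ?_⟩
        rw [halg, halg, Prod.ext_iff]
        exact ⟨by simpa using hr', by simp⟩
      · obtain ⟨r', hr'⟩ := hinv₂ q hq x.2 (Ideal.mem_map_of_mem _ hx)
        refine ⟨((0, r') : B × C), ?_⟩
        rw [halg, halg, Prod.ext_iff]
        exact ⟨by simp, by simpa using hr'⟩

theorem isPruferRing_prod_iff :
    IsPruferRing (B × C) ↔ IsPruferRing B ∧ IsPruferRing C := by
  letI := prodAlgebra B C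
  haveI := prod_isLocalization B C
  rw [isPruferRing_iff_charOn (B × C) (FractionRing B × FractionRing C),
    isPruferRing_iff_charOn B (FractionRing B), isPruferRing_iff_charOn C (FractionRing C)]
  exact pruferCharOn_prod_iff B C

end

theorem biAmalgamation_top {A B C : Type*} [CommRing A] [CommRing B] [CommRing C]
    (f : A →+* B) (g : A →+* C) : biAmalgamation f g (⊤ : Ideal B) (⊤ : Ideal C) = ⊤ := by
  ext x
  simp only [Subring.mem_top, iff_true]
  exact ⟨0, x.1, x.2, trivial, trivial, by simp⟩

theorem biAmalg_c_eq_top {A B C : Type*} [CommRing A] [CommRing B] [CommRing C]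
    (f : A →+* B) (g : A →+* C) (𝔟 : Ideal B) (𝔠 : Ideal C)
    (hcomp : 𝔟.comap f = 𝔠.comap g) (hb : 𝔟 = ⊤) : 𝔠 = ⊤ := by
  rw [Ideal.eq_top_iff_one]
  have h1 : (1 : A) ∈ 𝔠.comap g := by
    rw [← hcomp, hb]; trivial
  simpa using h1

section biAmalg
variable {A B C : Type*} [CommRing A] [CommRing B] [CommRing C]
  (f : A →+* B) (g : A →+* C) (𝔟 : Ideal B) (𝔠 : Ideal C)
  (S : Subring (B × C))
  (hmem : ∀ z : B × C, z ∈ S ↔ ∃ a β γ, β ∈ 𝔟 ∧ γ ∈ 𝔠 ∧ z = (f a + β, g a + γ))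

include hmem

theorem mem_nzd_sub {b : B} (hb : b ∈ 𝔟) (hbr : b ∈ nonZeroDivisors B)
    {c : C} (hc : c ∈ 𝔠) (hcr : c ∈ nonZeroDivisors C)
    {z : ↥S} (hz : z ∈ nonZeroDivisors ↥S) :
    (z : B × C).1 ∈ nonZeroDivisors B ∧ (z : B × C).2 ∈ nonZeroDivisors C := by
  rw [mem_nonZeroDivisors_iff_right] at hz
  constructor
  · rw [mem_nonZeroDivisors_iff_right]
    intro w hw
    have ht : ((w * b, 0) : B × C) ∈ S :=
      (hmem _).mpr ⟨0, w * b, 0, Ideal.mul_mem_left _ _ hb, 𝔠.zero_mem, by simp⟩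
    have h0 : (⟨(w * b, 0), ht⟩ : ↥S) * z = 0 := by
      apply Subtype.ext
      show ((w * b, 0) : B × C) * (z : B × C) = 0
      rw [Prod.ext_iff]
      refine ⟨?_, by simp⟩
      show w * b * (z : B × C).1 = 0
      rw [mul_right_comm, hw, zero_mul]
    have h1 := congrArg Subtype.val (hz _ h0)
    have hwb : w * b = 0 := congrArg Prod.fst h1
    exact mem_nonZeroDivisors_iff_right.mp hbr w hwb
  · rw [mem_nonZeroDivisors_iff_right]
    intro w hw
    have ht : ((0, w * c) : B × C) ∈ S :=
      (hmem _).mpr ⟨0, 0, w * c, 𝔟.zero_mem, Ideal.mul_mem_left _ _ hc, by simp⟩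
    have h0 : (⟨(0, w * c), ht⟩ : ↥S) * z = 0 := by
      apply Subtype.ext
      show ((0, w * c) : B × C) * (z : B × C) = 0
      rw [Prod.ext_iff]
      refine ⟨by simp, ?_⟩
      show w * c * (z : B × C).2 = 0
      rw [mul_right_comm, hw, zero_mul]
    have h1 := congrArg Subtype.val (hz _ h0)
    have hwc : w * c = 0 := congrArg Prod.snd h1
    exact mem_nonZeroDivisors_iff_right.mp hcr w hwc

theorem sub_b_top (hcomp : 𝔟.comap f = 𝔠.comap g)
    (hbreg : ∃ x ∈ 𝔟, x ∈ nonZeroDivisors B) (hcreg : ∃ y ∈ 𝔠, y ∈ nonZeroDivisors C)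
    (h : IsPruferRing ↥S) : 𝔟 = ⊤ := by
  classical
  obtain ⟨b, hb, hbr⟩ := hbreg
  obtain ⟨c, hc, hcr⟩ := hcreg
  let ψ : ↥S →+* FractionRing B × FractionRing C :=
    ((algebraMap B (FractionRing B)).prodMap (algebraMap C (FractionRing C))).comp S.subtype
  have hψval : ∀ s : ↥S, ψ s = (algebraMap B (FractionRing B) (s : B × C).1,
      algebraMap C (FractionRing C) (s : B × C).2) := fun _ => rfl
  have hψ : ∀ s : nonZeroDivisors ↥S, IsUnit (ψ s) := by
    rintro ⟨s, hs⟩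
    obtain ⟨h1, h2⟩ := mem_nzd_sub f g 𝔟 𝔠 S hmem hb hbr hc hcr hs
    rw [hψval, isUnit_iff_exists]
    obtain ⟨u, hu1, hu2⟩ := isUnit_iff_exists.mp
      (IsLocalization.map_units (M := nonZeroDivisors B) (FractionRing B) ⟨_, h1⟩)
    obtain ⟨v, hv1, hv2⟩ := isUnit_iff_exists.mp
      (IsLocalization.map_units (M := nonZeroDivisors C) (FractionRing C) ⟨_, h2⟩)
    exact ⟨(u, v), by rw [Prod.ext_iff]; exact ⟨hu1, hv1⟩, by rw [Prod.ext_iff]; exact ⟨hu2, hv2⟩⟩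
  let φ : FractionRing ↥S →+* FractionRing B × FractionRing C := IsLocalization.lift hψ
  have hφ : ∀ r : ↥S, φ (algebraMap ↥S (FractionRing ↥S) r) = ψ r :=
    fun r => IsLocalization.lift_eq hψ r
  let M : Submodule B (FractionRing B) := Submodule.map (Algebra.linearMap B (FractionRing B)) 𝔟
  let T : Submodule ↥S (FractionRing ↥S) :=
    { carrier := {z | (φ z).1 ∈ M}
      add_mem' := fun {z₁ z₂} h1 h2 => by
        show (φ (z₁ + z₂)).1 ∈ M
        rw [map_add, Prod.fst_add]
        exact M.add_mem h1 h2
      zero_mem' := by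
        show (φ 0).1 ∈ M
        rw [map_zero]
        exact M.zero_mem
      smul_mem' := fun r z hz => by
        show (φ (r • z)).1 ∈ M
        rw [show r • z = algebraMap (↥S) (FractionRing ↥S) r * z from Algebra.smul_def r z,
          map_mul, hφ, Prod.fst_mul, hψval]
        show algebraMap B (FractionRing B) (r : B × C).1 * (φ z).1 ∈ M
        rw [← Algebra.smul_def]
        exact M.smul_mem _ hz }
  have hxmem : ((b, 0) : B × C) ∈ S := (hmem _).mpr ⟨0, b, 0, hb, 𝔠.zero_mem, by simp⟩
  have hymem : ((0, c) : B × C) ∈ S := (hmem _).mpr ⟨0, 0, c, 𝔟.zero_mem, hc, by simp⟩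
  let x : ↥S := ⟨(b, 0), hxmem⟩
  let y : ↥S := ⟨(0, c), hymem⟩
  have hxI : x ∈ Ideal.span {x, y} := Ideal.subset_span (Set.mem_insert _ _)
  have hyI : y ∈ Ideal.span {x, y} := Ideal.subset_span (Set.mem_insert_of_mem _ rfl)
  have hfg : (Ideal.span {x, y}).FG := ⟨{x, y}, by simp⟩
  have hreg : x + y ∈ nonZeroDivisors ↥S := by
    rw [mem_nonZeroDivisors_iff_right]
    intro z hz
    have hxy : ((x + y : ↥S) : B × C) = (b, c) := by
      push_cast
      show ((b, 0) : B × C) + (0, c) = (b, c)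
      rw [Prod.ext_iff]
      constructor <;> simp
    have hz' : (z : B × C) * ((b, c) : B × C) = 0 := by
      rw [← hxy]
      exact_mod_cast congrArg Subtype.val hz
    rw [Prod.ext_iff] at hz'
    apply Subtype.ext
    rw [Prod.ext_iff]
    exact ⟨mem_nonZeroDivisors_iff_right.mp hbr _ hz'.1, mem_nonZeroDivisors_iff_right.mp hcr _ hz'.2⟩
  obtain ⟨F, hF⟩ := h (Ideal.span {x, y}) hfg ⟨x + y, Ideal.add_mem _ hxI hyI, hreg⟩
  have key : Submodule.map (Algebra.linearMap ↥S (FractionRing ↥S)) (Ideal.span {x, y}) * F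
      ≤ T := by
    rw [Submodule.mul_le]
    rintro m hm n hn
    obtain ⟨v, hv, rfl⟩ := Submodule.mem_map.mp hm
    obtain ⟨r, s, hrs⟩ := Ideal.mem_span_pair.mp hv
    show (φ (Algebra.linearMap ↥S (FractionRing ↥S) v * n)).1 ∈ M
    rw [Algebra.linearMap_apply, map_mul, hφ, Prod.fst_mul, hψval]
    show algebraMap B (FractionRing B) (v : B × C).1 * (φ n).1 ∈ M
    have hv1 : (v : B × C).1 = (r : B × C).1 * b := by
      have h' := congrArg (fun t : ↥S => ((t : B × C)).1) hrs
      push_cast at h'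
      rw [← h']
      show (r : B × C).1 * b + (s : B × C).1 * 0 = (r : B × C).1 * b
      ring
    have hbn : algebraMap B (FractionRing B) b * (φ n).1 ∈ M := by
      have hxn : algebraMap ↥S (FractionRing ↥S) x * n ∈ (1 : Submodule ↥S (FractionRing ↥S)) := by
        rw [← hF]
        exact Submodule.mul_mem_mul (Submodule.mem_map.mpr ⟨x, hxI, rfl⟩) hn
      obtain ⟨w, hw⟩ := Submodule.mem_one.mp hxn
      have hφw := congrArg φ hw
      rw [map_mul, hφ, hφ] at hφw
      have hw2 : algebraMap C (FractionRing C) (w : B × C).2 = 0 := by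
        have h2 := congrArg Prod.snd hφw
        rw [Prod.snd_mul, hψval, hψval] at h2
        refine h2.trans ?_
        show algebraMap C (FractionRing C) ((x : B × C).2) * (φ n).2 = 0
        show algebraMap C (FractionRing C) 0 * (φ n).2 = 0
        rw [map_zero, zero_mul]
      have hw0 : (w : B × C).2 = 0 := by
        have hinj : Function.Injective (algebraMap C (FractionRing C)) :=
          IsLocalization.injective _ (le_refl (nonZeroDivisors C))
        apply hinj
        rw [hw2, map_zero]
      obtain ⟨a, β, γ, hβ, hγ, hwval⟩ := (hmem _).mp w.2
      have hga : g a ∈ 𝔠 := by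
        have hg0 : g a + γ = 0 := by
          have h3 := congrArg Prod.snd hwval
          rw [hw0] at h3
          exact h3.symm
        have h4 : g a = -γ := eq_neg_of_add_eq_zero_left hg0
        rw [h4]
        exact 𝔠.neg_mem hγ
      have hfa : f a ∈ 𝔟 := by
        have h5 : a ∈ 𝔠.comap g := hga
        rw [← hcomp] at h5
        exact h5
      have hw1 : (w : B × C).1 ∈ 𝔟 := by
        have h6 := congrArg Prod.fst hwval
        rw [h6]
        exact 𝔟.add_mem hfa hβ
      have h1 := congrArg Prod.fst hφw
      rw [Prod.fst_mul, hψval, hψval] at h1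
      have h1' : algebraMap B (FractionRing B) (w : B × C).1
          = algebraMap B (FractionRing B) b * (φ n).1 := by
        refine h1.trans ?_
        show algebraMap B (FractionRing B) ((x : B × C).1) * (φ n).1 = _
        rfl
      rw [← h1']
      exact Submodule.mem_map.mpr ⟨(w : B × C).1, hw1, rfl⟩
    rw [hv1, map_mul, mul_assoc, ← Algebra.smul_def]
    exact M.smul_mem _ hbn
  have h1T : (1 : FractionRing ↥S) ∈ T := key (by rw [hF]; exact Submodule.one_le.mp le_rfl)
  have h1M : (1 : FractionRing B) ∈ M := by
    have h1 : (φ 1).1 ∈ M := h1T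
    rwa [map_one, Prod.fst_one] at h1
  obtain ⟨β, hβ, hβ1⟩ := Submodule.mem_map.mp h1M
  have hinjB : Function.Injective (algebraMap B (FractionRing B)) :=
    IsLocalization.injective _ (le_refl (nonZeroDivisors B))
  have hβeq : β = 1 := by
    apply hinjB
    rw [map_one]
    exact hβ1
  rw [Ideal.eq_top_iff_one, ← hβeq]
  exact hβ

end biAmalg

/-- If `𝔟` and `𝔠` are regular ideals, then `A ⋈^{f,g} (𝔟,𝔠)` is a Prüfer ring iff
`B` and `C` are Prüfer rings and `𝔟 = B`. -/
theorem biAmalgamation_prufer_iff {A B C : Type*} [CommRing A] [CommRing B] [CommRing C]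
    (f : A →+* B) (g : A →+* C) (𝔟 : Ideal B) (𝔠 : Ideal C)
    (hcomp : 𝔟.comap f = 𝔠.comap g)
    (hbreg : ∃ x ∈ 𝔟, x ∈ nonZeroDivisors B)
    (hcreg : ∃ y ∈ 𝔠, y ∈ nonZeroDivisors C) :
    IsPruferRing ↥(biAmalgamation f g 𝔟 𝔠) ↔
      IsPruferRing B ∧ IsPruferRing C ∧ 𝔟 = ⊤ := by
  constructor
  · intro h
    have hb : 𝔟 = ⊤ :=
      sub_b_top f g 𝔟 𝔠 (biAmalgamation f g 𝔟 𝔠) (fun z => Iff.rfl) hcomp hbreg hcreg h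
    have hc : 𝔠 = ⊤ := biAmalg_c_eq_top f g 𝔟 𝔠 hcomp hb
    subst hb
    subst hc
    rw [biAmalgamation_top] at h
    have h2 : IsPruferRing (B × C) := isPruferRing_congr Subring.topEquiv h
    obtain ⟨hB, hC⟩ := (isPruferRing_prod_iff B C).mp h2
    exact ⟨hB, hC, rfl⟩
  · rintro ⟨hB, hC, hb⟩
    have hc : 𝔠 = ⊤ := biAmalg_c_eq_top f g 𝔟 𝔠 hcomp hb
    subst hb
    subst hc
    rw [biAmalgamation_top]
    exact isPruferRing_congr Subring.topEquiv.symm ((isPruferRing_prod_iff B C).mpr ⟨hB, hC⟩)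
end

section
/- Set 𝔨 := ker(f) ∩ ker(g). Assume that A/𝔨 is a total ring of fractions (i.e., every non-zero-divisor of A/𝔨 is a unit), that 𝔟 is contained in the Jacobson radical of B, that 𝔠 is contained in the Jacobson radical of C, and that 𝔟 and 𝔠 are torsion A/𝔨-modules (with the A/𝔨-module structures induced by f and g respectively, torsion meaning every element is annihilated by some non-zero-divisor of A/𝔨). Then A⋈^{f,g}(𝔟,𝔠) is a total ring of fractions, i.e., every non-zero-divisor of A⋈^{f,g}(𝔟,𝔠) is a unit. -/
/-- If `A/𝔨` is a total ring of fractions (with `𝔨 = ker f ∩ ker g`), `𝔟 ⊆ Jac(B)`,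
`𝔠 ⊆ Jac(C)`, and `𝔟` and `𝔠` are torsion `A/𝔨`-modules (via `f` and `g`), then
`A ⋈^{f,g} (𝔟,𝔠)` is a total ring of fractions. -/
theorem biAmalgamation_total_ring_of_fractions {A B C : Type*}
    [CommRing A] [CommRing B] [CommRing C]
    (f : A →+* B) (g : A →+* C) (𝔟 : Ideal B) (𝔠 : Ideal C)
    (hcomp : 𝔟.comap f = 𝔠.comap g)
    (htot : ∀ x : A ⧸ (RingHom.ker f ⊓ RingHom.ker g),
      x ∈ nonZeroDivisors (A ⧸ (RingHom.ker f ⊓ RingHom.ker g)) → IsUnit x)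
    (hbJ : 𝔟 ≤ (⊥ : Ideal B).jacobson) (hcJ : 𝔠 ≤ (⊥ : Ideal C).jacobson)
    (htorb : ∀ x ∈ 𝔟, ∃ a : A,
      Ideal.Quotient.mk (RingHom.ker f ⊓ RingHom.ker g) a ∈
        nonZeroDivisors (A ⧸ (RingHom.ker f ⊓ RingHom.ker g)) ∧ f a * x = 0)
    (htorc : ∀ y ∈ 𝔠, ∃ a : A,
      Ideal.Quotient.mk (RingHom.ker f ⊓ RingHom.ker g) a ∈
        nonZeroDivisors (A ⧸ (RingHom.ker f ⊓ RingHom.ker g)) ∧ g a * y = 0) :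
    ∀ x : ↥(biAmalgamation f g 𝔟 𝔠),
      x ∈ nonZeroDivisors ↥(biAmalgamation f g 𝔟 𝔠) → IsUnit x := by
  classical
  intro x hx
  obtain ⟨x, hxmem⟩ := x
  obtain ⟨a, β, γ, hβ, hγ, rfl⟩ := hxmem
  set 𝔨 := RingHom.ker f ⊓ RingHom.ker g with h𝔨
  set π := Ideal.Quotient.mk 𝔨 with hπ
  obtain ⟨a₁, ha₁, hfa₁⟩ := htorb β hβ
  obtain ⟨a₂, ha₂, hga₂⟩ := htorc γ hγ
  -- π a is a non-zero-divisor
  have hclaim : π a ∈ nonZeroDivisors (A ⧸ 𝔨) := by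
    rw [mem_nonZeroDivisors_iff_right]
    intro z hz
    obtain ⟨s, rfl⟩ := Ideal.Quotient.mk_surjective z
    have hsa : s * a ∈ 𝔨 := by
      rwa [← Ideal.Quotient.eq_zero_iff_mem, map_mul]
    obtain ⟨hsf, hsg⟩ := Submodule.mem_inf.mp hsa
    rw [RingHom.mem_ker] at hsf hsg
    set t := a₁ * a₂ * s with ht
    have hymem : ((f t, g t) : B × C) ∈ biAmalgamation f g 𝔟 𝔠 :=
      ⟨t, 0, 0, 𝔟.zero_mem, 𝔠.zero_mem, by simp⟩
    have hB : f t * (f a + β) = 0 := by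
      have h1 : f t * f a = 0 := by
        rw [← map_mul, show t * a = a₁ * a₂ * (s * a) by ring, map_mul, hsf, mul_zero]
      have h2 : f t * β = 0 := by
        rw [show t = a₂ * s * a₁ by ring, map_mul, mul_assoc, hfa₁, mul_zero]
      rw [mul_add, h1, h2, add_zero]
    have hC : g t * (g a + γ) = 0 := by
      have h1 : g t * g a = 0 := by
        rw [← map_mul, show t * a = a₁ * a₂ * (s * a) by ring, map_mul, hsg, mul_zero]
      have h2 : g t * γ = 0 := by
        rw [show t = a₁ * s * a₂ by ring, map_mul, mul_assoc, hga₂, mul_zero]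
      rw [mul_add, h1, h2, add_zero]
    have hy0 : (⟨(f t, g t), hymem⟩ : ↥(biAmalgamation f g 𝔟 𝔠)) = 0 := by
      refine mem_nonZeroDivisors_iff_right.mp hx _ ?_
      exact Subtype.ext (Prod.ext hB hC)
    have hy0' : f t = 0 ∧ g t = 0 := by
      have := congrArg (fun w : ↥(biAmalgamation f g 𝔟 𝔠) => (w : B × C)) hy0
      exact ⟨congrArg Prod.fst this, congrArg Prod.snd this⟩
    have hπt : π t = 0 := by
      rw [hπ, Ideal.Quotient.eq_zero_iff_mem]
      exact Submodule.mem_inf.mpr ⟨RingHom.mem_ker.mpr hy0'.1, RingHom.mem_ker.mpr hy0'.2⟩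
    have h12 : π s * (π a₁ * π a₂) = 0 := by
      rw [← map_mul, ← map_mul, show s * (a₁ * a₂) = t by rw [ht]; ring, hπt]
    exact mem_nonZeroDivisors_iff_right.mp (mul_mem ha₁ ha₂) _ h12
  -- invert π a
  obtain ⟨b, hab⟩ := (htot _ hclaim).exists_right_inv
  obtain ⟨a', rfl⟩ := Ideal.Quotient.mk_surjective b
  have hker1 : a * a' - 1 ∈ 𝔨 := by
    rw [← Ideal.Quotient.eq_zero_iff_mem, map_sub, map_mul, map_one, sub_eq_zero]
    exact hab
  obtain ⟨hk1, hk2⟩ := Submodule.mem_inf.mp hker1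
  rw [RingHom.mem_ker, map_sub, map_mul, map_one, sub_eq_zero] at hk1 hk2
  -- invert 1 + f a' * β and 1 + g a' * γ
  have hub : IsUnit (f a' * β * 1 + 1) :=
    Ideal.mem_jacobson_bot.mp (hbJ (Ideal.mul_mem_left _ _ hβ)) 1
  have huc : IsUnit (g a' * γ * 1 + 1) :=
    Ideal.mem_jacobson_bot.mp (hcJ (Ideal.mul_mem_left _ _ hγ)) 1
  rw [mul_one] at hub huc
  obtain ⟨u, hu⟩ := hub.exists_right_inv
  obtain ⟨v, hv⟩ := huc.exists_right_inv
  -- the inverse lies in the bi-amalgamation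
  have hzmem : ((f a' * u, g a' * v) : B × C) ∈ biAmalgamation f g 𝔟 𝔠 := by
    refine ⟨a', f a' * u - f a', g a' * v - g a', ?_, ?_, by
      simp only [Prod.ext_iff]; constructor <;> ring⟩
    · have : f a' * u - f a' = -((f a' * f a' * u) * β) := by linear_combination f a' * hu
      rw [this]
      exact 𝔟.neg_mem (Ideal.mul_mem_left _ _ hβ)
    · have : g a' * v - g a' = -((g a' * g a' * v) * γ) := by linear_combination g a' * hv
      rw [this]
      exact 𝔠.neg_mem (Ideal.mul_mem_left _ _ hγ)
  refine IsUnit.of_mul_eq_one (a := _) ⟨_, hzmem⟩ ?_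
  refine Subtype.ext (Prod.ext ?_ ?_)
  · show (f a + β) * (f a' * u) = 1
    linear_combination u * hk1 + hu
  · show (g a + γ) * (g a' * v) = 1
    linear_combination v * hk2 + hv
end

section
/- Assume that A⋈^{f,g}(𝔟,𝔠) is a local ring satisfying condition (⋆): for all a ∈ A, b ∈ 𝔟, c ∈ 𝔠, if a + 𝔦₀ is a zero-divisor of A/𝔦₀ then (f(a)+b, g(a)+c) is a zero-divisor of A⋈^{f,g}(𝔟,𝔠). If A/𝔦₀ is a Prüfer ring and for every r ∈ A such that r + 𝔦₀ is a non-zero-divisor of A/𝔦₀ one has 𝔟 = f(r)𝔟 and 𝔠 = g(r)𝔠, then A⋈^{f,g}(𝔟,𝔠) is a Prüfer ring. -/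
section Helpers

variable {A B C : Type*} [CommRing A] [CommRing B] [CommRing C]
  (f : A →+* B) (g : A →+* C) (𝔟 : Ideal B) (𝔠 : Ideal C)

lemma mem_biAmalg {x : B × C} :
    x ∈ biAmalgamation f g 𝔟 𝔠 ↔ ∃ a β γ, β ∈ 𝔟 ∧ γ ∈ 𝔠 ∧ x = (f a + β, g a + γ) :=
  Iff.rfl

/-- the canonical injection `A/𝔦₀ → B/𝔟`. -/
noncomputable def qmap : A ⧸ 𝔟.comap f →+* B ⧸ 𝔟 :=
  Ideal.Quotient.lift _ ((Ideal.Quotient.mk 𝔟).comp f)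
    (fun a ha => by simpa [Ideal.Quotient.eq_zero_iff_mem] using ha)

lemma qmap_mk (a : A) :
    qmap f 𝔟 (Ideal.Quotient.mk _ a) = Ideal.Quotient.mk 𝔟 (f a) := rfl

lemma qmap_injective : Function.Injective (qmap f 𝔟) := by
  rw [injective_iff_map_eq_zero]
  intro a ha
  obtain ⟨a, rfl⟩ := Ideal.Quotient.mk_surjective a
  have ha' : f a ∈ 𝔟 := Ideal.Quotient.eq_zero_iff_mem.mp ha
  exact Ideal.Quotient.eq_zero_iff_mem.mpr ha'

noncomputable def repA (x : ↥(biAmalgamation f g 𝔟 𝔠)) : A :=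
  ((mem_biAmalg f g 𝔟 𝔠).mp x.2).choose

lemma repA_spec (x : ↥(biAmalgamation f g 𝔟 𝔠)) :
    ∃ β γ, β ∈ 𝔟 ∧ γ ∈ 𝔠 ∧
      (x : B × C) = (f (repA f g 𝔟 𝔠 x) + β, g (repA f g 𝔟 𝔠 x) + γ) :=
  ((mem_biAmalg f g 𝔟 𝔠).mp x.2).choose_spec

lemma repA_eq (x : ↥(biAmalgamation f g 𝔟 𝔠)) {a : A} {β : B} {γ : C}
    (hβ : β ∈ 𝔟) (hγ : γ ∈ 𝔠) (hx : (x : B × C) = (f a + β, g a + γ)) :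
    Ideal.Quotient.mk (𝔟.comap f) (repA f g 𝔟 𝔠 x) = Ideal.Quotient.mk _ a := by
  obtain ⟨β', γ', hβ', hγ', hx'⟩ := repA_spec f g 𝔟 𝔠 x
  rw [hx] at hx'
  have h1 : f a + β = f (repA f g 𝔟 𝔠 x) + β' := congrArg Prod.fst hx'
  rw [Ideal.Quotient.mk_eq_mk_iff_sub_mem]
  show f (repA f g 𝔟 𝔠 x - a) ∈ 𝔟
  have : f (repA f g 𝔟 𝔠 x - a) = β - β' := by
    rw [map_sub]; linear_combination -h1
  rw [this]
  exact 𝔟.sub_mem hβ hβ'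

/-- the canonical projection from the bi-amalgamation onto `A/𝔦₀`. -/
noncomputable def biAmalgProj : ↥(biAmalgamation f g 𝔟 𝔠) →+* A ⧸ 𝔟.comap f where
  toFun x := Ideal.Quotient.mk _ (repA f g 𝔟 𝔠 x)
  map_one' := by
    have := repA_eq f g 𝔟 𝔠 1 (a := 1) 𝔟.zero_mem 𝔠.zero_mem (by ext <;> simp)
    simpa using this
  map_zero' := by
    have := repA_eq f g 𝔟 𝔠 0 (a := 0) 𝔟.zero_mem 𝔠.zero_mem (by ext <;> simp)
    simpa using this
  map_mul' x y := by
    obtain ⟨β₁, γ₁, hβ₁, hγ₁, hx⟩ := repA_spec f g 𝔟 𝔠 x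
    obtain ⟨β₂, γ₂, hβ₂, hγ₂, hy⟩ := repA_spec f g 𝔟 𝔠 y
    set a₁ := repA f g 𝔟 𝔠 x
    set a₂ := repA f g 𝔟 𝔠 y
    have hxy : ((x * y : ↥(biAmalgamation f g 𝔟 𝔠)) : B × C) =
        (f (a₁ * a₂) + (f a₁ * β₂ + β₁ * f a₂ + β₁ * β₂),
         g (a₁ * a₂) + (g a₁ * γ₂ + γ₁ * g a₂ + γ₁ * γ₂)) := by
      have : ((x * y : ↥(biAmalgamation f g 𝔟 𝔠)) : B × C) = (x : B × C) * (y : B × C) := rfl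
      rw [this, hx, hy]
      simp only [Prod.mk_mul_mk, Prod.mk.injEq, map_mul]
      constructor <;> ring
    have := repA_eq f g 𝔟 𝔠 (x * y)
      (𝔟.add_mem (𝔟.add_mem (Ideal.mul_mem_left _ _ hβ₂) (Ideal.mul_mem_right _ _ hβ₁))
        (Ideal.mul_mem_right _ _ hβ₁))
      (𝔠.add_mem (𝔠.add_mem (Ideal.mul_mem_left _ _ hγ₂) (Ideal.mul_mem_right _ _ hγ₁))
        (Ideal.mul_mem_right _ _ hγ₁)) hxy
    show Ideal.Quotient.mk (𝔟.comap f) (repA f g 𝔟 𝔠 (x * y)) =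
      Ideal.Quotient.mk (𝔟.comap f) a₁ * Ideal.Quotient.mk (𝔟.comap f) a₂
    rw [this, map_mul]
  map_add' x y := by
    obtain ⟨β₁, γ₁, hβ₁, hγ₁, hx⟩ := repA_spec f g 𝔟 𝔠 x
    obtain ⟨β₂, γ₂, hβ₂, hγ₂, hy⟩ := repA_spec f g 𝔟 𝔠 y
    set a₁ := repA f g 𝔟 𝔠 x
    set a₂ := repA f g 𝔟 𝔠 y
    have hxy : ((x + y : ↥(biAmalgamation f g 𝔟 𝔠)) : B × C) =
        (f (a₁ + a₂) + (β₁ + β₂), g (a₁ + a₂) + (γ₁ + γ₂)) := by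
      have : ((x + y : ↥(biAmalgamation f g 𝔟 𝔠)) : B × C) = (x : B × C) + (y : B × C) := rfl
      rw [this, hx, hy]
      simp only [Prod.mk_add_mk, Prod.mk.injEq, map_add]
      constructor <;> ring
    have := repA_eq f g 𝔟 𝔠 (x + y) (𝔟.add_mem hβ₁ hβ₂) (𝔠.add_mem hγ₁ hγ₂) hxy
    show Ideal.Quotient.mk (𝔟.comap f) (repA f g 𝔟 𝔠 (x + y)) =
      Ideal.Quotient.mk (𝔟.comap f) a₁ + Ideal.Quotient.mk (𝔟.comap f) a₂
    rw [this, map_add]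

lemma biAmalgProj_eq (x : ↥(biAmalgamation f g 𝔟 𝔠)) {a : A} {β : B} {γ : C}
    (hβ : β ∈ 𝔟) (hγ : γ ∈ 𝔠) (hx : (x : B × C) = (f a + β, g a + γ)) :
    biAmalgProj f g 𝔟 𝔠 x = Ideal.Quotient.mk _ a :=
  repA_eq f g 𝔟 𝔠 x hβ hγ hx

lemma biAmalgProj_surjective : Function.Surjective (biAmalgProj f g 𝔟 𝔠) := by
  intro z
  obtain ⟨a, rfl⟩ := Ideal.Quotient.mk_surjective z
  exact ⟨⟨(f a, g a), ⟨a, 0, 0, 𝔟.zero_mem, 𝔠.zero_mem, by simp⟩⟩,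
    biAmalgProj_eq f g 𝔟 𝔠 _ 𝔟.zero_mem 𝔠.zero_mem (by simp)⟩

lemma biAmalgProj_eq_zero_iff (hcomp : 𝔟.comap f = 𝔠.comap g)
    (x : ↥(biAmalgamation f g 𝔟 𝔠)) :
    biAmalgProj f g 𝔟 𝔠 x = 0 ↔ (x : B × C).1 ∈ 𝔟 ∧ (x : B × C).2 ∈ 𝔠 := by
  obtain ⟨β, γ, hβ, hγ, hx⟩ := repA_spec f g 𝔟 𝔠 x
  set a := repA f g 𝔟 𝔠 x
  have hproj : biAmalgProj f g 𝔟 𝔠 x = Ideal.Quotient.mk _ a := rfl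
  rw [hproj, Ideal.Quotient.eq_zero_iff_mem]
  constructor
  · intro ha
    have ha' : g a ∈ 𝔠 := by rw [hcomp] at ha; exact ha
    constructor
    · rw [hx]; exact 𝔟.add_mem ha hβ
    · rw [hx]; exact 𝔠.add_mem ha' hγ
  · rintro ⟨h1, h2⟩
    have : f a = (x : B × C).1 - β := by rw [hx]; ring
    show f a ∈ 𝔟
    rw [this]
    exact 𝔟.sub_mem h1 hβ

end Helpers

set_option maxHeartbeats 4000000 in
set_option synthInstance.maxHeartbeats 1000000 in
/-- Suppose `A ⋈^{f,g} (𝔟,𝔠)` is a local ring satisfying condition (⋆): whenever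
`a + 𝔦₀` is a zero-divisor of `A/𝔦₀`, the element `(f a + β, g a + γ)` is a zero-divisor
of `A ⋈^{f,g} (𝔟,𝔠)`. If `A/𝔦₀` is a Prüfer ring and `𝔟 = f(r)𝔟`, `𝔠 = g(r)𝔠` for every
`r ∈ A` regular modulo `𝔦₀`, then `A ⋈^{f,g} (𝔟,𝔠)` is a Prüfer ring. -/
theorem biAmalgamation_prufer_of_local {A B C : Type*} [CommRing A] [CommRing B] [CommRing C]
    (f : A →+* B) (g : A →+* C) (𝔟 : Ideal B) (𝔠 : Ideal C)
    (hcomp : 𝔟.comap f = 𝔠.comap g)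
    (hloc : IsLocalRing ↥(biAmalgamation f g 𝔟 𝔠))
    (hstar : ∀ (x : ↥(biAmalgamation f g 𝔟 𝔠)) (a : A) (β : B) (γ : C),
      β ∈ 𝔟 → γ ∈ 𝔠 → (x : B × C) = (f a + β, g a + γ) →
      (∃ z : A ⧸ 𝔟.comap f, z ≠ 0 ∧ Ideal.Quotient.mk (𝔟.comap f) a * z = 0) →
      ∃ y : ↥(biAmalgamation f g 𝔟 𝔠), y ≠ 0 ∧ x * y = 0)
    (hquot : IsPruferRing (A ⧸ 𝔟.comap f))
    (hr : ∀ r : A, Ideal.Quotient.mk (𝔟.comap f) r ∈ nonZeroDivisors (A ⧸ 𝔟.comap f) →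
      Ideal.span {f r} * 𝔟 = 𝔟 ∧ Ideal.span {g r} * 𝔠 = 𝔠) :
    IsPruferRing ↥(biAmalgamation f g 𝔟 𝔠) := by
  haveI := hloc
  set R := ↥(biAmalgamation f g 𝔟 𝔠) with hR
  set Q := A ⧸ 𝔟.comap f with hQ
  set π := biAmalgProj f g 𝔟 𝔠 with hπ
  have hπsurj : Function.Surjective π := biAmalgProj_surjective f g 𝔟 𝔠
  -- 𝔦₀ is a proper ideal
  have hne : 𝔟.comap f ≠ ⊤ := by
    intro htop
    have hQsub : Subsingleton Q := Ideal.Quotient.subsingleton_iff.mpr htop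
    have h0 : Ideal.Quotient.mk (𝔟.comap f) 0 ∈ nonZeroDivisors Q := by
      rw [mem_nonZeroDivisors_iff_right]
      intro z _
      exact Subsingleton.elim z 0
    obtain ⟨hb, hc⟩ := hr 0 h0
    have hb' : 𝔟 = ⊥ := by
      rw [← hb, map_zero,
        show Ideal.span ({0} : Set B) = ⊥ from Ideal.span_singleton_eq_bot.mpr rfl,
        Ideal.bot_mul]
    have hc' : 𝔠 = ⊥ := by
      rw [← hc, map_zero,
        show Ideal.span ({0} : Set C) = ⊥ from Ideal.span_singleton_eq_bot.mpr rfl,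
        Ideal.bot_mul]
    have hall : ∀ x : R, x = 0 := by
      intro x
      obtain ⟨a, β, γ, hβ, hγ, hx⟩ := (mem_biAmalg f g 𝔟 𝔠).mp x.2
      have hfa : f a = 0 := by
        have : a ∈ 𝔟.comap f := htop ▸ Submodule.mem_top
        simpa [hb'] using this
      have hga : g a = 0 := by
        have : a ∈ 𝔠.comap g := by rw [← hcomp, htop]; exact Submodule.mem_top
        simpa [hc'] using this
      have hβ0 : β = 0 := by simpa [hb'] using hβ
      have hγ0 : γ = 0 := by simpa [hc'] using hγ
      apply Subtype.ext
      rw [hx, hfa, hga, hβ0, hγ0]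
      simp
    rcases exists_pair_ne R with ⟨x, y, hxy⟩
    exact hxy ((hall x).trans (hall y).symm)
  haveI hQnt : Nontrivial Q := Ideal.Quotient.nontrivial_iff.mpr hne
  haveI hQloc : IsLocalRing Q := IsLocalRing.of_surjective' π hπsurj
  -- Step C : the kernel of π is contained in any "regular-type" principal ideal
  have stepC : ∀ (x : R) (a : A) (β : B) (γ : C), β ∈ 𝔟 → γ ∈ 𝔠 →
      (x : B × C) = (f a + β, g a + γ) →
      Ideal.Quotient.mk (𝔟.comap f) a ∈ nonZeroDivisors Q →
      ∀ y : R, (y : B × C).1 ∈ 𝔟 → (y : B × C).2 ∈ 𝔠 → y ∈ Ideal.span {x} := by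
    intro x a β γ hβ hγ hx ha y hy1 hy2
    obtain ⟨h𝔟, h𝔠⟩ := hr a ha
    obtain ⟨β₁, hβ₁, hfβ⟩ := Ideal.mem_span_singleton_mul.mp
      (show β ∈ Ideal.span {f a} * 𝔟 by rw [h𝔟]; exact hβ)
    obtain ⟨γ₁, hγ₁, hgγ⟩ := Ideal.mem_span_singleton_mul.mp
      (show γ ∈ Ideal.span {g a} * 𝔠 by rw [h𝔠]; exact hγ)
    set s : R := ⟨(β₁, γ₁), ⟨0, β₁, γ₁, hβ₁, hγ₁, by simp⟩⟩ with hs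
    have hsnu : ¬ IsUnit s := by
      intro hsu
      obtain ⟨u, hu⟩ := hsu
      have h2 : (u : R) * ((u⁻¹ : Rˣ) : R) = 1 := u.mul_inv
      have h1 : ((u : R) : B × C).1 * (((u⁻¹ : Rˣ) : R) : B × C).1 = 1 :=
        congrArg (fun t : R => (t : B × C).1) h2
      rw [hu] at h1
      have hone : (1 : B) ∈ 𝔟 := by
        rw [← h1]
        exact Ideal.mul_mem_right _ _ hβ₁
      apply hne
      rw [Ideal.eq_top_iff_one]
      show f 1 ∈ 𝔟
      rw [map_one]
      exact hone
    have hu1s : IsUnit (1 + s) := by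
      by_contra h
      have hneg : ¬ IsUnit (-s) := fun h' => hsnu (by simpa using h'.neg)
      have := IsLocalRing.nonunits_add (h : (1 + s) ∈ nonunits R) (hneg : -s ∈ nonunits R)
      simp only [add_neg_cancel_right] at this
      exact one_notMem_nonunits this
    set x'' : R := ⟨(f a, g a), ⟨a, 0, 0, 𝔟.zero_mem, 𝔠.zero_mem, by simp⟩⟩ with hx''
    have hfact : x = x'' * (1 + s) := by
      apply Subtype.ext
      have hcoe : ((x'' * (1 + s) : R) : B × C)
          = ((f a, g a) : B × C) * ((1 : B × C) + (β₁, γ₁)) := rfl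
      rw [hx, hcoe]
      have h1 : (1 : B × C) + ((β₁, γ₁) : B × C) = (1 + β₁, 1 + γ₁) := rfl
      rw [h1, Prod.mk_mul_mk, Prod.mk.injEq]
      constructor
      · linear_combination -hfβ
      · linear_combination -hgγ
    obtain ⟨b₁, hb₁, hfb⟩ := Ideal.mem_span_singleton_mul.mp
      (show (y : B × C).1 ∈ Ideal.span {f a} * 𝔟 by rw [h𝔟]; exact hy1)
    obtain ⟨c₁, hc₁, hgc⟩ := Ideal.mem_span_singleton_mul.mp
      (show (y : B × C).2 ∈ Ideal.span {g a} * 𝔠 by rw [h𝔠]; exact hy2)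
    set w : R := ⟨(b₁, c₁), ⟨0, b₁, c₁, hb₁, hc₁, by simp⟩⟩ with hw
    have hinv : (1 + s) * ↑hu1s.unit⁻¹ = 1 := hu1s.mul_val_inv
    have hy : y = x'' * w := by
      apply Subtype.ext
      have hcoe : ((x'' * w : R) : B × C) = (f a * b₁, g a * c₁) := rfl
      rw [hcoe, hfb, hgc]
    have hyx : (↑hu1s.unit⁻¹ * w) * x = y := by
      rw [hfact]
      calc (↑hu1s.unit⁻¹ * w) * (x'' * (1 + s))
          = ((1 + s) * ↑hu1s.unit⁻¹) * (x'' * w) := by ring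
        _ = x'' * w := by rw [hinv, one_mul]
        _ = y := hy.symm
    exact Ideal.mem_span_singleton'.mpr ⟨↑hu1s.unit⁻¹ * w, hyx⟩
  -- transfer of regularity from R to Q via (⋆)
  have hreg : ∀ x : R, x ∈ nonZeroDivisors R → ∀ (a : A) (β : B) (γ : C), β ∈ 𝔟 → γ ∈ 𝔠 →
      (x : B × C) = (f a + β, g a + γ) →
      Ideal.Quotient.mk (𝔟.comap f) a ∈ nonZeroDivisors Q := by
    intro x hx a β γ hβ hγ hrep
    rw [mem_nonZeroDivisors_iff_right]
    intro z hz
    by_contra hz0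
    obtain ⟨y, hy0, hxy⟩ := hstar x a β γ hβ hγ hrep ⟨z, hz0, by rw [mul_comm]; exact hz⟩
    exact hy0 (mem_nonZeroDivisors_iff_right.mp hx y (by rw [mul_comm]; exact hxy))
  -- main argument
  rintro I hFG ⟨x₀, hx₀I, hx₀reg⟩
  set Ibar : Ideal Q := Ideal.map π I with hIbar
  have hIbarFG : Ibar.FG := Ideal.FG.map hFG π
  obtain ⟨a₀, β₀, γ₀, hβ₀, hγ₀, hx₀⟩ := (mem_biAmalg f g 𝔟 𝔠).mp x₀.2
  have ha₀reg : Ideal.Quotient.mk (𝔟.comap f) a₀ ∈ nonZeroDivisors Q :=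
    hreg x₀ hx₀reg a₀ β₀ γ₀ hβ₀ hγ₀ hx₀
  have hπx₀ : π x₀ = Ideal.Quotient.mk (𝔟.comap f) a₀ :=
    biAmalgProj_eq f g 𝔟 𝔠 x₀ hβ₀ hγ₀ hx₀
  have ha₀Ibar : Ideal.Quotient.mk (𝔟.comap f) a₀ ∈ Ibar := hπx₀ ▸ Ideal.mem_map_of_mem π hx₀I
  obtain ⟨F, hF⟩ := hquot Ibar hIbarFG ⟨_, ha₀Ibar, ha₀reg⟩
  set S := FractionRing Q with hS
  have hιinj : Function.Injective (algebraMap Q S) := IsFractionRing.injective Q S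
  have h1mem : (1 : S) ∈ Submodule.map (Algebra.linearMap Q S) Ibar * F := by
    rw [hF]
    exact Submodule.mem_one.mpr ⟨1, map_one _⟩
  have key := Submodule.mul_induction_on
    (C := fun y => ∃ w : Q, algebraMap Q S w = y ∧
      (IsUnit w → ∃ a ∈ Ibar, ∃ v ∈ F, ∃ w' : Q, IsUnit w' ∧
        (algebraMap Q S a) * v = algebraMap Q S w'))
    h1mem
    (by
      rintro m hm n hn
      obtain ⟨a, haIbar, ham⟩ := Submodule.mem_map.mp hm
      have hmn : m * n ∈ (1 : Submodule Q S) := by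
        rw [← hF]; exact Submodule.mul_mem_mul hm hn
      obtain ⟨w, hwmn⟩ := Submodule.mem_one.mp hmn
      exact ⟨w, hwmn, fun hwu => ⟨a, haIbar, n, hn, w, hwu, by
        rw [hwmn, ← ham]; rfl⟩⟩)
    (by
      rintro y₁ y₂ ⟨w₁, hw₁, h₁⟩ ⟨w₂, hw₂, h₂⟩
      exact ⟨w₁ + w₂, by rw [map_add, hw₁, hw₂], fun hu =>
        (IsLocalRing.isUnit_or_isUnit_of_isUnit_add hu).elim h₁ h₂⟩)
  obtain ⟨w₀, hw₀, himp⟩ := key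
  have hw₀1 : w₀ = 1 := hιinj (by rw [hw₀, map_one])
  obtain ⟨a, haIbar, v, hvF, w, hwu, heq⟩ := himp (hw₀1 ▸ isUnit_one)
  -- a is a non-zero-divisor of Q
  have hareg : a ∈ nonZeroDivisors Q := by
    rw [mem_nonZeroDivisors_iff_right]
    intro z hz
    have hzw : z * w = 0 := by
      apply hιinj
      rw [map_mul, map_zero, ← heq]
      calc algebraMap Q S z * (algebraMap Q S a * v)
          = algebraMap Q S (z * a) * v := by rw [map_mul]; ring
        _ = 0 := by rw [hz, map_zero, zero_mul]
    calc z = z * (w * ↑hwu.unit⁻¹) := by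
            rw [hwu.mul_val_inv, mul_one]
      _ = (z * w) * ↑hwu.unit⁻¹ := by ring
      _ = 0 := by rw [hzw, zero_mul]
  -- Ibar is contained in the span of a
  have hIbarsub : Ibar ≤ Ideal.span {a} := by
    intro c hc
    have hcv : algebraMap Q S c * v ∈ (1 : Submodule Q S) := by
      rw [← hF]
      exact Submodule.mul_mem_mul (Submodule.mem_map_of_mem hc) hvF
    obtain ⟨d, hd⟩ := Submodule.mem_one.mp hcv
    have hcw : c * w = a * d := by
      apply hιinj
      rw [map_mul, map_mul, ← heq, hd]
      ring
    rw [Ideal.mem_span_singleton']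
    refine ⟨d * ↑hwu.unit⁻¹, ?_⟩
    calc d * ↑hwu.unit⁻¹ * a = (a * d) * ↑hwu.unit⁻¹ := by ring
      _ = (c * w) * ↑hwu.unit⁻¹ := by rw [hcw]
      _ = c * (w * ↑hwu.unit⁻¹) := by ring
      _ = c := by rw [hwu.mul_val_inv, mul_one]
  -- lift the generator
  obtain ⟨x, hxI, hπx⟩ := (Ideal.mem_map_iff_of_surjective π hπsurj).mp haIbar
  obtain ⟨ax, βx, γx, hβx, hγx, hxrep⟩ := (mem_biAmalg f g 𝔟 𝔠).mp x.2
  have hπxa : Ideal.Quotient.mk (𝔟.comap f) ax = a := by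
    rw [← hπx]
    exact (biAmalgProj_eq f g 𝔟 𝔠 x hβx hγx hxrep).symm
  have haxreg : Ideal.Quotient.mk (𝔟.comap f) ax ∈ nonZeroDivisors Q := by
    rw [hπxa]; exact hareg
  -- I is principal, generated by x
  have hI : I = Ideal.span {x} := by
    apply le_antisymm
    · intro y hyI
      have hπy : π y ∈ Ideal.span {a} := hIbarsub (Ideal.mem_map_of_mem π hyI)
      obtain ⟨e, he⟩ := Ideal.mem_span_singleton'.mp hπy
      obtain ⟨z, hz⟩ := hπsurj e
      have hker : π (y - z * x) = 0 := by
        rw [map_sub, map_mul, hz, hπx, he]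
        exact sub_self _
      have hmem := (biAmalgProj_eq_zero_iff f g 𝔟 𝔠 hcomp _).mp hker
      have h1 : y - z * x ∈ Ideal.span {x} :=
        stepC x ax βx γx hβx hγx hxrep haxreg _ hmem.1 hmem.2
      have h2 : z * x ∈ Ideal.span {x} :=
        Ideal.mul_mem_left _ _ (Ideal.subset_span rfl)
      have hy' : y = (y - z * x) + z * x := by ring
      rw [hy']
      exact Ideal.add_mem _ h1 h2
    · rw [Ideal.span_le, Set.singleton_subset_iff]
      exact hxI
  -- x is a non-zero-divisor of R
  have hxreg : x ∈ nonZeroDivisors R := by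
    rw [mem_nonZeroDivisors_iff_right]
    intro t ht
    obtain ⟨r', hr'⟩ := Ideal.mem_span_singleton'.mp (hI ▸ hx₀I)
    apply mem_nonZeroDivisors_iff_right.mp hx₀reg t
    rw [← hr']
    calc t * (r' * x) = r' * (t * x) := by ring
      _ = 0 := by rw [ht, mul_zero]
  -- conclude
  have hu : IsUnit (algebraMap R (FractionRing R) x) :=
    IsLocalization.map_units (M := nonZeroDivisors R) (FractionRing R) ⟨x, hxreg⟩
  refine ⟨Submodule.span R {(↑hu.unit⁻¹ : FractionRing R)}, ?_⟩
  rw [hI]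
  have hmap : Submodule.map (Algebra.linearMap R (FractionRing R)) (Ideal.span {x})
      = Submodule.span R {algebraMap R (FractionRing R) x} := by
    rw [Ideal.span, Submodule.map_span, Set.image_singleton]
    rfl
  rw [hmap, Submodule.span_mul_span, Set.singleton_mul_singleton, hu.mul_val_inv]
  exact (Submodule.one_eq_span).symm
end
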